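/- arXiv:1604.06382 — 2 statements merged into one kernel-verified Lean document; each statement's English description precedes it below -/
import Mathlib

section
/- Let T' be a finite tree containing five distinct vertices v₁, w₁, w₂, w₃, v forming a path v₁–w₁–w₂–w₃–v, where in T' the degrees satisfy deg(v₁) = 1 and deg(w₁) = deg(w₂) = deg(w₃) = 2. Let T be the tree obtained from T' by adding three new vertices u₁, u₂, u₃ with edges u₁u₂, u₂u₃, and vu₁. Then γ₂(T) = γ₂(T') + 2 and α₂(T) = α₂(T') + 2; in particular α₂(T) − γ₂(T) = α₂(T') − γ₂(T'). -/
/-!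
Write `u₁, u₂, u₃` for the new vertices. A 2-independent set of `T` contains at most two of
them (otherwise `u₂` has two neighbours in it), and `u₂, u₃` can be added to any 2-independent
set of `T'`. Any 2-dominating set of `T'` plus `u₁, u₃` 2-dominates `T`. Conversely, a
2-dominating set `S` of `T` contains the leaf `u₃` and one of `u₁, u₂`, and its trace on `T'`
2-dominates every vertex of `T'` except possibly `v`. If `v` is not in the trace, the pendant
path forces `v₁`, `w₃` and one of `w₁, w₂` into it, and exchanging the trace's vertices among
`w₁, w₂, w₃` for `w₂, v` gives a 2-dominating set of `T'` that is no larger.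
-/

open SimpleGraph

/-- `S` is a `k`-dominating set of the subgraph of `G` induced by `U`:
`S ⊆ U` and every vertex of `U` not in `S` has at least `k` neighbors in `S`. -/
def IsKDomOn {V : Type*} (G : SimpleGraph V) (k : ℕ) (U S : Set V) : Prop :=
  S ⊆ U ∧ ∀ v ∈ U, v ∉ S → k ≤ (G.neighborSet v ∩ S).ncard

/-- `S` is a `k`-independent set of the subgraph of `G` induced by `U`:
`S ⊆ U` and every vertex of `S` has at most `k - 1` neighbors in `S`. -/
def IsKIndOn {V : Type*} (G : SimpleGraph V) (k : ℕ) (U S : Set V) : Prop :=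
  S ⊆ U ∧ ∀ v ∈ S, (G.neighborSet v ∩ S).ncard ≤ k - 1

/-- The `k`-domination number of the subgraph of `G` induced by `U`. -/
noncomputable def gammaK {V : Type*} (G : SimpleGraph V) (k : ℕ) (U : Set V) : ℕ :=
  sInf {n | ∃ S, IsKDomOn G k U S ∧ S.ncard = n}

/-- The `k`-independence number of the subgraph of `G` induced by `U`. -/
noncomputable def alphaK {V : Type*} (G : SimpleGraph V) (k : ℕ) (U : Set V) : ℕ :=
  sSup {n | ∃ S, IsKIndOn G k U S ∧ S.ncard = n}

namespace Set

theorem ncard_eq_ncard_preimage_inl_add_ncard_preimage_inr {α β : Type*} [Finite α] [Finite β]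
    (s : Set (α ⊕ β)) : s.ncard = (Sum.inl ⁻¹' s).ncard + (Sum.inr ⁻¹' s).ncard := by
  rw [← ncard_image_of_injective (Sum.inl ⁻¹' s) Sum.inl_injective,
    ← ncard_image_of_injective (Sum.inr ⁻¹' s) Sum.inr_injective,
    ← ncard_union_eq disjoint_image_inl_image_inr]
  congr 1
  ext (a | b) <;> simp

theorem ncard_image_inl_union_image_inr {α β : Type*} [Finite α] [Finite β] (s : Set α)
    (t : Set β) : (Sum.inl '' s ∪ Sum.inr '' t).ncard = s.ncard + t.ncard := by
  rw [ncard_union_eq disjoint_image_inl_image_inr, ncard_image_of_injective s Sum.inl_injective,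
    ncard_image_of_injective t Sum.inr_injective]

theorem ncard_diff_union_le_of_le {α : Type*} {s t u : Set α} (hs : s.Finite)
    (h : t.ncard ≤ (s ∩ u).ncard) : (s \ u ∪ t).ncard ≤ s.ncard :=
  calc (s \ u ∪ t).ncard ≤ (s \ u).ncard + t.ncard := ncard_union_le _ _
    _ ≤ (s \ u).ncard + (s ∩ u).ncard := Nat.add_le_add_left h _
    _ = s.ncard := by rw [add_comm, ncard_inter_add_ncard_sdiff_eq_ncard s u hs]

theorem eq_singleton_of_ncard_eq_one {α : Type*} {s : Set α} {a : α} (hs : s.ncard = 1)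
    (ha : a ∈ s) : s = {a} := by
  obtain ⟨b, rfl⟩ := ncard_eq_one.1 hs
  rw [mem_singleton_iff.1 ha]

theorem eq_pair_of_ncard_eq_two {α : Type*} {s : Set α} {a b : α} (hs : s.ncard = 2)
    (ha : a ∈ s) (hb : b ∈ s) (hab : a ≠ b) : s = {a, b} :=
  (eq_of_subset_of_ncard_le (pair_subset ha hb) (by rw [hs, ncard_pair hab])
    (finite_of_ncard_pos (by omega))).symm

theorem ncard_le_one_of_subset_singleton {α : Type*} {s : Set α} {a : α} (h : s ⊆ {a}) :
    s.ncard ≤ 1 :=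
  (ncard_le_ncard h).trans (ncard_singleton a).le

end Set

section DominationAndIndependence

variable {V : Type*}

theorem gammaK_le_ncard {G : SimpleGraph V} {k : ℕ} {U S : Set V} (hS : IsKDomOn G k U S) :
    gammaK G k U ≤ S.ncard :=
  Nat.sInf_le ⟨S, hS, rfl⟩

theorem exists_isKDomOn_ncard_eq_gammaK (G : SimpleGraph V) (k : ℕ) (U : Set V) :
    ∃ S, IsKDomOn G k U S ∧ S.ncard = gammaK G k U :=
  Nat.sInf_mem (s := {n | ∃ S, IsKDomOn G k U S ∧ S.ncard = n})
    ⟨_, U, ⟨subset_rfl, fun _ hv hv' => absurd hv hv'⟩, rfl⟩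

theorem bddAbove_isKIndOn_ncard [Finite V] (G : SimpleGraph V) (k : ℕ) (U : Set V) :
    BddAbove {n | ∃ S, IsKIndOn G k U S ∧ S.ncard = n} :=
  ⟨Nat.card V, by rintro _ ⟨S, -, rfl⟩; exact Set.ncard_le_card S⟩

theorem ncard_le_alphaK [Finite V] {G : SimpleGraph V} {k : ℕ} {U S : Set V}
    (hS : IsKIndOn G k U S) : S.ncard ≤ alphaK G k U :=
  le_csSup (bddAbove_isKIndOn_ncard G k U) ⟨S, hS, rfl⟩

theorem exists_isKIndOn_ncard_eq_alphaK [Finite V] (G : SimpleGraph V) (k : ℕ) (U : Set V) :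
    ∃ S, IsKIndOn G k U S ∧ S.ncard = alphaK G k U :=
  Nat.sSup_mem (s := {n | ∃ S, IsKIndOn G k U S ∧ S.ncard = n})
    ⟨_, ∅, ⟨Set.empty_subset U, fun _ h => h.elim⟩, Set.ncard_empty V⟩
    (bddAbove_isKIndOn_ncard G k U)

theorem SimpleGraph.ncard_neighborSet_inter_preimage_le {W : Type*} [Finite W]
    {G : SimpleGraph V} {H : SimpleGraph W} (f : G ↪g H) (x : V) (S : Set W) :
    (G.neighborSet x ∩ f ⁻¹' S).ncard ≤ (H.neighborSet (f x) ∩ S).ncard :=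
  Set.ncard_le_ncard_of_injOn f (fun _ hy => ⟨f.map_adj_iff.2 hy.1, hy.2⟩) f.injective.injOn
    (Set.toFinite _)

theorem IsKIndOn.comap {W : Type*} [Finite W] {G : SimpleGraph V} {H : SimpleGraph W} {k : ℕ}
    {U I : Set W} (f : G ↪g H) (hI : IsKIndOn H k U I) : IsKIndOn G k (f ⁻¹' U) (f ⁻¹' I) :=
  ⟨Set.preimage_mono hI.1, fun x hx =>
    (SimpleGraph.ncard_neighborSet_inter_preimage_le f x I).trans (hI.2 _ hx)⟩

end DominationAndIndependence

namespace SimpleGraph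

variable {V : Type*} {G : SimpleGraph V} {v₁ w₁ w₂ w₃ v : V}

theorem isKDomOn_of_pendant_path [Finite V] (hv₁W : v₁ ∉ ({w₁, w₂, w₃} : Set V))
    (hw₂v : w₂ ≠ v) (hN₂ : G.neighborSet w₁ = {v₁, w₂}) (hN₄ : G.neighborSet w₃ = {w₂, v})
    {S : Set V} (hS : ∀ x ≠ v, x ∉ S → 2 ≤ (G.neighborSet x ∩ S).ncard) (hv₁ : v₁ ∈ S) :
    IsKDomOn G 2 Set.univ (S \ {w₁, w₂, w₃} ∪ {w₂, v}) := by
  set S' := S \ {w₁, w₂, w₃} ∪ {w₂, v}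
  have hv₁' : v₁ ∈ S' := Or.inl ⟨hv₁, hv₁W⟩
  have hw₂' : w₂ ∈ S' := Or.inr (Or.inl rfl)
  have hv' : v ∈ S' := Or.inr (Or.inr rfl)
  refine ⟨Set.subset_univ _, fun x _ hx => ?_⟩
  by_cases hxw₁ : x = w₁
  · rw [hxw₁, hN₂, Set.inter_eq_left.2 (Set.pair_subset hv₁' hw₂'),
      Set.ncard_pair fun h => hv₁W (by simp [h])]
  by_cases hxw₃ : x = w₃
  · rw [hxw₃, hN₄, Set.inter_eq_left.2 (Set.pair_subset hw₂' hv'), Set.ncard_pair hw₂v]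
  have hxv : x ≠ v := fun h => hx (h ▸ hv')
  have hxw₂ : x ≠ w₂ := fun h => hx (h ▸ hw₂')
  have hxS : x ∉ S := fun h => hx (Or.inl ⟨h, by simp [hxw₁, hxw₂, hxw₃]⟩)
  refine (hS x hxv hxS).trans (Set.ncard_le_ncard ?_ (Set.toFinite _))
  rintro y ⟨hxy, hyS⟩
  have hyw₁ : y ≠ w₁ := by
    rintro rfl
    have : x ∈ G.neighborSet y := hxy.symm
    rw [hN₂] at this
    rcases this with rfl | rfl <;> contradiction
  have hyw₃ : y ≠ w₃ := by
    rintro rfl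
    have : x ∈ G.neighborSet y := hxy.symm
    rw [hN₄] at this
    rcases this with rfl | rfl <;> contradiction
  refine ⟨hxy, ?_⟩
  by_cases hyw₂ : y = w₂
  · exact hyw₂ ▸ hw₂'
  · exact Or.inl ⟨hyS, by simp [hyw₁, hyw₂, hyw₃]⟩

theorem gammaK_le_ncard_of_pendant_path [Finite V]
    (hdist : [v₁, w₁, w₂, w₃, v].Pairwise (· ≠ ·))
    (hN₁ : G.neighborSet v₁ = {w₁}) (hN₂ : G.neighborSet w₁ = {v₁, w₂})
    (hN₃ : G.neighborSet w₂ = {w₁, w₃}) (hN₄ : G.neighborSet w₃ = {w₂, v}) {S : Set V}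
    (hS : ∀ x ≠ v, x ∉ S → 2 ≤ (G.neighborSet x ∩ S).ncard) :
    gammaK G 2 Set.univ ≤ S.ncard := by
  by_cases hv : v ∈ S
  · exact gammaK_le_ncard ⟨Set.subset_univ S, fun x _ hx => hS x (fun h => hx (h ▸ hv)) hx⟩
  simp only [List.pairwise_cons, List.mem_cons, List.not_mem_nil, List.Pairwise.nil, or_false,
    forall_eq_or_imp, forall_eq] at hdist
  obtain ⟨⟨hv₁w₁, hv₁w₂, hv₁w₃, hv₁v⟩, ⟨-, hw₁w₃, -⟩, ⟨hw₂w₃, hw₂v⟩, hw₃v, -⟩ := hdist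
  have mem_of_ncard_le_one (x : V) (hx : x ≠ v) (h : (G.neighborSet x ∩ S).ncard ≤ 1) : x ∈ S :=
    by_contra fun hxS => by linarith [hS x hx hxS]
  have hv₁ : v₁ ∈ S := mem_of_ncard_le_one v₁ hv₁v
    (Set.ncard_le_one_of_subset_singleton (by rw [hN₁]; exact Set.inter_subset_left))
  have hw₃ : w₃ ∈ S := mem_of_ncard_le_one w₃ hw₃v <| Set.ncard_le_one_of_subset_singleton
    (a := w₂) (by rw [hN₄]; rintro _ ⟨rfl | rfl, h⟩ <;> trivial)
  have hw₁₂ : w₁ ∈ S ∨ w₂ ∈ S := or_iff_not_imp_left.2 fun hw₁ =>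
    mem_of_ncard_le_one w₂ hw₂v <| Set.ncard_le_one_of_subset_singleton (a := w₃)
      (by rw [hN₃]; rintro _ ⟨rfl | rfl, h⟩ <;> trivial)
  have hdom := isKDomOn_of_pendant_path (by simp [hv₁w₁, hv₁w₂, hv₁w₃]) hw₂v hN₂ hN₄ hS hv₁
  refine (gammaK_le_ncard hdom).trans (Set.ncard_diff_union_le_of_le (Set.toFinite S) ?_)
  rw [Set.ncard_pair hw₂v, ← Nat.lt_iff_add_one_le, Set.one_lt_ncard_iff]
  rcases hw₁₂ with hw | hw
  · exact ⟨w₁, w₃, ⟨hw, by simp⟩, ⟨hw₃, by simp⟩, hw₁w₃⟩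
  · exact ⟨w₂, w₃, ⟨hw, by simp⟩, ⟨hw₃, by simp⟩, hw₂w₃⟩

variable (G v) in
/-- `Sum.inr 0, 1, 2` are the new vertices `u₁, u₂, u₃`. -/
def addPendantP3 : SimpleGraph (V ⊕ Fin 3) :=
  (G ⊕g pathGraph 3) ⊔ edge (.inl v) (.inr 0)

@[simp]
theorem addPendantP3_adj_inl_inl {x y : V} :
    (G.addPendantP3 v).Adj (.inl x) (.inl y) ↔ G.Adj x y := by
  simp [addPendantP3, edge_adj]

@[simp]
theorem addPendantP3_adj_inl_inr {x : V} {i : Fin 3} :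
    (G.addPendantP3 v).Adj (.inl x) (.inr i) ↔ x = v ∧ i = 0 := by
  simp [addPendantP3, edge_adj, eq_comm]

@[simp]
theorem addPendantP3_adj_inr_inl {x : V} {i : Fin 3} :
    (G.addPendantP3 v).Adj (.inr i) (.inl x) ↔ x = v ∧ i = 0 := by
  rw [adj_comm, addPendantP3_adj_inl_inr]

@[simp]
theorem addPendantP3_adj_inr_inr {i j : Fin 3} :
    (G.addPendantP3 v).Adj (.inr i) (.inr j) ↔ (pathGraph 3).Adj i j := by
  simp [addPendantP3, edge_adj]

def addPendantP3Inl : G ↪g G.addPendantP3 v :=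
  ⟨.inl, addPendantP3_adj_inl_inl⟩

@[simp]
theorem coe_addPendantP3Inl : ⇑(addPendantP3Inl : G ↪g G.addPendantP3 v) = Sum.inl :=
  rfl

theorem addPendantP3_neighborSet_inr_one :
    (G.addPendantP3 v).neighborSet (.inr 1) = {.inr 0, .inr 2} := by
  ext (x | i)
  · simp [adj_comm]
  · fin_cases i <;> simp [pathGraph_adj]

theorem addPendantP3_neighborSet_inr_two :
    (G.addPendantP3 v).neighborSet (.inr 2) = {.inr 1} := by
  ext (x | i)
  · simp [adj_comm]
  · fin_cases i <;> simp [pathGraph_adj]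

theorem addPendantP3_neighborSet_inl_inter {x : V} {S : Set (V ⊕ Fin 3)}
    (h : x = v → .inr 0 ∉ S) :
    (G.addPendantP3 v).neighborSet (.inl x) ∩ S = .inl '' (G.neighborSet x ∩ .inl ⁻¹' S) := by
  ext (y | i)
  · simp
  · simpa using fun hx (hi : i = 0) => hi ▸ h hx

theorem addPendantP3_ncard_preimage_inr_le_two {U I : Set (V ⊕ Fin 3)}
    (hI : IsKIndOn (G.addPendantP3 v) 2 U I) : (Sum.inr ⁻¹' I).ncard ≤ 2 := by
  by_contra! h
  have hall : Sum.inr ⁻¹' I = Set.univ := by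
    by_contra hne
    have := Set.ncard_lt_card hne
    simp only [Nat.card_eq_fintype_card, Fintype.card_fin] at this
    omega
  have hmem (i : Fin 3) : Sum.inr i ∈ I := Set.eq_univ_iff_forall.1 hall i
  have := hI.2 _ (hmem 1)
  rw [addPendantP3_neighborSet_inr_one, Set.inter_eq_left.2 (Set.pair_subset (hmem 0) (hmem 2)),
    Set.ncard_pair (by simp)] at this
  omega

theorem addPendantP3_isKIndOn_extend {I : Set V} (hI : IsKIndOn G 2 Set.univ I) :
    IsKIndOn (G.addPendantP3 v) 2 Set.univ (.inl '' I ∪ .inr '' {1, 2}) := by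
  refine ⟨Set.subset_univ _, ?_⟩
  rintro (x | i) hx
  · rw [addPendantP3_neighborSet_inl_inter (by simp),
      Set.ncard_image_of_injective _ Sum.inl_injective]
    simpa [Set.preimage_image_eq _ Sum.inl_injective] using hI.2 x (by simpa using hx)
  · obtain rfl | rfl | rfl : i = 0 ∨ i = 1 ∨ i = 2 := by omega
    · simp at hx
    · refine Set.ncard_le_one_of_subset_singleton (a := .inr 2) ?_
      rw [addPendantP3_neighborSet_inr_one]
      rintro _ ⟨rfl | rfl, h⟩ <;> simp_all
    · refine Set.ncard_le_one_of_subset_singleton (a := .inr 1) ?_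
      rw [addPendantP3_neighborSet_inr_two]
      exact Set.inter_subset_left

theorem addPendantP3_two_le_ncard_preimage_inr {S : Set (V ⊕ Fin 3)}
    (hS : IsKDomOn (G.addPendantP3 v) 2 Set.univ S) : 2 ≤ (Sum.inr ⁻¹' S).ncard := by
  have mem_of_ncard_le_one (i : Fin 3)
      (h : ((G.addPendantP3 v).neighborSet (.inr i) ∩ S).ncard ≤ 1) : Sum.inr i ∈ S :=
    by_contra fun hi => by linarith [hS.2 _ trivial hi]
  have h₂ : Sum.inr 2 ∈ S := mem_of_ncard_le_one 2 <| Set.ncard_le_one_of_subset_singleton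
    (by rw [addPendantP3_neighborSet_inr_two]; exact Set.inter_subset_left)
  have h₀₁ : Sum.inr 0 ∈ S ∨ Sum.inr 1 ∈ S := or_iff_not_imp_left.2 fun h₀ =>
    mem_of_ncard_le_one 1 <| Set.ncard_le_one_of_subset_singleton (a := .inr 2)
      (by rw [addPendantP3_neighborSet_inr_one]; rintro _ ⟨rfl | rfl, h⟩ <;> trivial)
  rw [← Nat.lt_iff_add_one_le, Set.one_lt_ncard_iff]
  rcases h₀₁ with h | h
  · exact ⟨0, 2, h, h₂, by decide⟩
  · exact ⟨1, 2, h, h₂, by decide⟩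

variable [Finite V]

theorem alphaK_addPendantP3 :
    alphaK (G.addPendantP3 v) 2 Set.univ = alphaK G 2 Set.univ + 2 := by
  apply le_antisymm
  · obtain ⟨I, hI, hcard⟩ := exists_isKIndOn_ncard_eq_alphaK (G.addPendantP3 v) 2 Set.univ
    rw [← hcard, Set.ncard_eq_ncard_preimage_inl_add_ncard_preimage_inr]
    exact add_le_add (ncard_le_alphaK (hI.comap addPendantP3Inl))
      (addPendantP3_ncard_preimage_inr_le_two hI)
  · obtain ⟨I, hI, hcard⟩ := exists_isKIndOn_ncard_eq_alphaK G 2 Set.univ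
    refine le_of_eq_of_le ?_ (ncard_le_alphaK (addPendantP3_isKIndOn_extend (v := v) hI))
    rw [Set.ncard_image_inl_union_image_inr, hcard, Set.ncard_pair (by decide)]

theorem gammaK_addPendantP3_le :
    gammaK (G.addPendantP3 v) 2 Set.univ ≤ gammaK G 2 Set.univ + 2 := by
  obtain ⟨D, hD, hcard⟩ := exists_isKDomOn_ncard_eq_gammaK G 2 Set.univ
  refine (gammaK_le_ncard (S := .inl '' D ∪ .inr '' {0, 2}) ⟨Set.subset_univ _, ?_⟩).trans ?_
  rintro (x | i) - hx
  · have hxD : x ∉ D := by simpa using hx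
    calc 2 ≤ (G.neighborSet x ∩ D).ncard := hD.2 x trivial hxD
      _ = (G.neighborSet x ∩ addPendantP3Inl ⁻¹' (.inl '' D ∪ .inr '' {0, 2})).ncard := by
        simp [Set.preimage_image_eq _ Sum.inl_injective]
      _ ≤ _ := ncard_neighborSet_inter_preimage_le _ _ _
  · obtain rfl | rfl | rfl : i = 0 ∨ i = 1 ∨ i = 2 := by omega
    · simp at hx
    · rw [addPendantP3_neighborSet_inr_one,
        Set.inter_eq_left.2 (Set.pair_subset (by simp) (by simp)), Set.ncard_pair (by simp)]
    · simp at hx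
  · rw [Set.ncard_image_inl_union_image_inr, hcard, Set.ncard_pair (by decide)]

theorem gammaK_add_two_le_addPendantP3 (hdist : [v₁, w₁, w₂, w₃, v].Pairwise (· ≠ ·))
    (hN₁ : G.neighborSet v₁ = {w₁}) (hN₂ : G.neighborSet w₁ = {v₁, w₂})
    (hN₃ : G.neighborSet w₂ = {w₁, w₃}) (hN₄ : G.neighborSet w₃ = {w₂, v}) :
    gammaK G 2 Set.univ + 2 ≤ gammaK (G.addPendantP3 v) 2 Set.univ := by
  obtain ⟨S, hS, hcard⟩ := exists_isKDomOn_ncard_eq_gammaK (G.addPendantP3 v) 2 Set.univ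
  rw [← hcard, Set.ncard_eq_ncard_preimage_inl_add_ncard_preimage_inr]
  refine add_le_add (gammaK_le_ncard_of_pendant_path hdist hN₁ hN₂ hN₃ hN₄ fun x hxv hx => ?_)
    (addPendantP3_two_le_ncard_preimage_inr hS)
  have := hS.2 (.inl x) trivial hx
  rwa [addPendantP3_neighborSet_inl_inter (absurd · hxv),
    Set.ncard_image_of_injective _ Sum.inl_injective] at this

end SimpleGraph

theorem stmt15_general {V : Type*} [Fintype V] (T' : SimpleGraph V)
    (v₁ w₁ w₂ w₃ v : V) (hdist : ([v₁, w₁, w₂, w₃, v] : List V).Pairwise (· ≠ ·))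
    (h1 : T'.Adj v₁ w₁) (h2 : T'.Adj w₁ w₂) (h3 : T'.Adj w₂ w₃) (h4 : T'.Adj w₃ v)
    (hd1 : (T'.neighborSet v₁).ncard = 1) (hdw1 : (T'.neighborSet w₁).ncard = 2)
    (hdw2 : (T'.neighborSet w₂).ncard = 2) (hdw3 : (T'.neighborSet w₃).ncard = 2)
    (T : SimpleGraph (V ⊕ Fin 3))
    (hadj : ∀ a b, T.Adj a b ↔
      ((∃ x y, T'.Adj x y ∧ a = Sum.inl x ∧ b = Sum.inl y) ∨
       (a = (Sum.inr 0 : V ⊕ Fin 3) ∧ b = Sum.inr 1) ∨ (a = Sum.inr 1 ∧ b = (Sum.inr 0 : V ⊕ Fin 3)) ∨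
       (a = (Sum.inr 1 : V ⊕ Fin 3) ∧ b = Sum.inr 2) ∨ (a = Sum.inr 2 ∧ b = (Sum.inr 1 : V ⊕ Fin 3)) ∨
       (a = Sum.inl v ∧ b = (Sum.inr 0 : V ⊕ Fin 3)) ∨ (a = (Sum.inr 0 : V ⊕ Fin 3) ∧ b = Sum.inl v))) :
    gammaK T 2 Set.univ = gammaK T' 2 Set.univ + 2 ∧
    alphaK T 2 Set.univ = alphaK T' 2 Set.univ + 2 ∧
    (alphaK T 2 Set.univ : ℤ) - (gammaK T 2 Set.univ : ℤ) =
      (alphaK T' 2 Set.univ : ℤ) - (gammaK T' 2 Set.univ : ℤ) := by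
  have hT : T = T'.addPendantP3 v := by
    ext (x | i) (y | j) <;> simp [hadj, pathGraph_adj, eq_comm, and_comm]
    omega
  subst hT
  have hdist' := hdist
  simp only [List.pairwise_cons, List.mem_cons, List.not_mem_nil, List.Pairwise.nil, or_false,
    forall_eq_or_imp, forall_eq] at hdist'
  obtain ⟨⟨-, hv₁w₂, -, -⟩, ⟨-, hw₁w₃, -⟩, ⟨-, hw₂v⟩, -, -⟩ := hdist'
  have hγ : gammaK (T'.addPendantP3 v) 2 Set.univ = gammaK T' 2 Set.univ + 2 :=
    le_antisymm gammaK_addPendantP3_le <| gammaK_add_two_le_addPendantP3 hdist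
      (Set.eq_singleton_of_ncard_eq_one hd1 h1)
      (Set.eq_pair_of_ncard_eq_two hdw1 h1.symm h2 hv₁w₂)
      (Set.eq_pair_of_ncard_eq_two hdw2 h2.symm h3 hw₁w₃)
      (Set.eq_pair_of_ncard_eq_two hdw3 h3.symm h4 hw₂v)
  refine ⟨hγ, alphaK_addPendantP3, ?_⟩
  rw [hγ, alphaK_addPendantP3]
  push_cast
  ring

theorem stmt15 {V : Type*} [Fintype V] (T' : SimpleGraph V) (hT' : T'.IsTree)
    (v₁ w₁ w₂ w₃ v : V) (hdist : ([v₁, w₁, w₂, w₃, v] : List V).Pairwise (· ≠ ·))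
    (h1 : T'.Adj v₁ w₁) (h2 : T'.Adj w₁ w₂) (h3 : T'.Adj w₂ w₃) (h4 : T'.Adj w₃ v)
    (hd1 : (T'.neighborSet v₁).ncard = 1) (hdw1 : (T'.neighborSet w₁).ncard = 2)
    (hdw2 : (T'.neighborSet w₂).ncard = 2) (hdw3 : (T'.neighborSet w₃).ncard = 2)
    (T : SimpleGraph (V ⊕ Fin 3))
    (hadj : ∀ a b, T.Adj a b ↔
      ((∃ x y, T'.Adj x y ∧ a = Sum.inl x ∧ b = Sum.inl y) ∨
       (a = (Sum.inr 0 : V ⊕ Fin 3) ∧ b = Sum.inr 1) ∨ (a = Sum.inr 1 ∧ b = (Sum.inr 0 : V ⊕ Fin 3)) ∨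
       (a = (Sum.inr 1 : V ⊕ Fin 3) ∧ b = Sum.inr 2) ∨ (a = Sum.inr 2 ∧ b = (Sum.inr 1 : V ⊕ Fin 3)) ∨
       (a = Sum.inl v ∧ b = (Sum.inr 0 : V ⊕ Fin 3)) ∨ (a = (Sum.inr 0 : V ⊕ Fin 3) ∧ b = Sum.inl v))) :
    gammaK T 2 Set.univ = gammaK T' 2 Set.univ + 2 ∧
    alphaK T 2 Set.univ = alphaK T' 2 Set.univ + 2 ∧
    (alphaK T 2 Set.univ : ℤ) - (gammaK T 2 Set.univ : ℤ) =
      (alphaK T' 2 Set.univ : ℤ) - (gammaK T' 2 Set.univ : ℤ) :=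
  stmt15_general T' v₁ w₁ w₂ w₃ v hdist h1 h2 h3 h4 hd1 hdw1 hdw2 hdw3 T hadj
end

section
/- Let T' be a finite tree containing five distinct vertices v₁, w₁, w₂, w₃, v₂ forming a path v₁–w₁–w₂–w₃–v₂, where in T' the degrees satisfy deg(v₁) = 1 and deg(w₁) = deg(w₂) = deg(w₃) = 2. Let T be the tree obtained from T' by adding three new vertices u₁, u₂, u₃ together with the edges u₁u₃, v₁u₁, and v₂u₂. Then γ₂(T) = γ₂(T') + 2 and α₂(T) = α₂(T') + 2; in particular α₂(T) − γ₂(T) = α₂(T') − γ₂(T'). -/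
open SimpleGraph

private lemma two_le_ncard' {α : Type*} {s : Set α} (hs : s.Finite) {a b : α}
    (ha : a ∈ s) (hb : b ∈ s) (hab : a ≠ b) : 2 ≤ s.ncard :=
  (Set.one_lt_ncard_iff hs).mpr ⟨a, b, ha, hb, hab⟩

private lemma exists_two' {α : Type*} {s : Set α} (hs : s.Finite) (h : 2 ≤ s.ncard) :
    ∃ a b, a ∈ s ∧ b ∈ s ∧ a ≠ b := (Set.one_lt_ncard_iff hs).mp h

private lemma pair_sub' {α : Type*} {s : Set α} {a b : α} (hs : s ⊆ {a, b}) (hab : a ≠ b)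
    (h2 : 2 ≤ s.ncard) : a ∈ s ∧ b ∈ s := by
  have he : s = {a, b} :=
    Set.eq_of_subset_of_ncard_le hs (by rw [Set.ncard_pair hab]; exact h2) (Set.toFinite _)
  rw [he]; exact ⟨Set.mem_insert _ _, Set.mem_insert_of_mem _ rfl⟩

private lemma ncard3' {α : Type*} {a b c : α} (hab : a ≠ b) (hac : a ≠ c) (hbc : b ≠ c) :
    ({a, b, c} : Set α).ncard = 3 := by
  rw [Set.ncard_insert_of_notMem (by simp [hab, hac]) (Set.toFinite _), Set.ncard_pair hbc]

private lemma ncard4' {α : Type*} {a b c d : α} (hab : a ≠ b) (hac : a ≠ c) (had : a ≠ d)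
    (hbc : b ≠ c) (hbd : b ≠ d) (hcd : c ≠ d) : ({a, b, c, d} : Set α).ncard = 4 := by
  rw [Set.ncard_insert_of_notMem (by simp [hab, hac, had]) (Set.toFinite _),
    ncard3' hbc hbd hcd]

private lemma ncard5' {α : Type*} {a b c d e : α} (hab : a ≠ b) (hac : a ≠ c) (had : a ≠ d)
    (hae : a ≠ e) (hbc : b ≠ c) (hbd : b ≠ d) (hbe : b ≠ e) (hcd : c ≠ d) (hce : c ≠ e)
    (hde : d ≠ e) : ({a, b, c, d, e} : Set α).ncard = 5 := by
  rw [Set.ncard_insert_of_notMem (by simp [hab, hac, had, hae]) (Set.toFinite _),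
    ncard4' hbc hbd hbe hcd hce hde]

private lemma ncard_le_one_of_subset_singleton {α : Type*} {s : Set α} {a : α}
    (h : s ⊆ {a}) : s.ncard ≤ 1 := by
  simpa using Set.ncard_le_ncard h (Set.toFinite _)

set_option maxHeartbeats 8000000 in
theorem stmt17 {V : Type*} [Fintype V] (T' : SimpleGraph V) (hT' : T'.IsTree)
    (v₁ w₁ w₂ w₃ v₂ : V) (hdist : ([v₁, w₁, w₂, w₃, v₂] : List V).Pairwise (· ≠ ·))
    (h1 : T'.Adj v₁ w₁) (h2 : T'.Adj w₁ w₂) (h3 : T'.Adj w₂ w₃) (h4 : T'.Adj w₃ v₂)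
    (hd1 : (T'.neighborSet v₁).ncard = 1) (hdw1 : (T'.neighborSet w₁).ncard = 2)
    (hdw2 : (T'.neighborSet w₂).ncard = 2) (hdw3 : (T'.neighborSet w₃).ncard = 2)
    (T : SimpleGraph (V ⊕ Fin 3))
    (hadj : ∀ a b, T.Adj a b ↔
      ((∃ x y, T'.Adj x y ∧ a = Sum.inl x ∧ b = Sum.inl y) ∨
       (a = (Sum.inr 0 : V ⊕ Fin 3) ∧ b = Sum.inr 2) ∨ (a = Sum.inr 2 ∧ b = (Sum.inr 0 : V ⊕ Fin 3)) ∨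
       (a = Sum.inl v₁ ∧ b = (Sum.inr 0 : V ⊕ Fin 3)) ∨ (a = (Sum.inr 0 : V ⊕ Fin 3) ∧ b = Sum.inl v₁) ∨
       (a = Sum.inl v₂ ∧ b = (Sum.inr 1 : V ⊕ Fin 3)) ∨ (a = (Sum.inr 1 : V ⊕ Fin 3) ∧ b = Sum.inl v₂))) :
    gammaK T 2 Set.univ = gammaK T' 2 Set.univ + 2 ∧
    alphaK T 2 Set.univ = alphaK T' 2 Set.univ + 2 ∧
    (alphaK T 2 Set.univ : ℤ) - (gammaK T 2 Set.univ : ℤ) =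
      (alphaK T' 2 Set.univ : ℤ) - (gammaK T' 2 Set.univ : ℤ) := by
  clear hT'
  simp only [List.pairwise_cons, List.mem_cons, List.mem_singleton, List.not_mem_nil] at hdist
  obtain ⟨ha, hb, hc, hd, -⟩ := hdist
  have e12 : v₁ ≠ w₁ := ha _ (by simp)
  have e13 : v₁ ≠ w₂ := ha _ (by simp)
  have e14 : v₁ ≠ w₃ := ha _ (by simp)
  have e15 : v₁ ≠ v₂ := ha _ (by simp)
  have e23 : w₁ ≠ w₂ := hb _ (by simp)
  have e24 : w₁ ≠ w₃ := hb _ (by simp)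
  have e25 : w₁ ≠ v₂ := hb _ (by simp)
  have e34 : w₂ ≠ w₃ := hc _ (by simp)
  have e35 : w₂ ≠ v₂ := hc _ (by simp)
  have e45 : w₃ ≠ v₂ := hd _ (by simp)
  clear ha hb hc hd
  have N1 : T'.neighborSet v₁ = {w₁} := by
    refine (Set.eq_of_subset_of_ncard_le ?_ ?_ (Set.toFinite _)).symm
    · simp [Set.singleton_subset_iff, h1]
    · simp [hd1]
  have Nw1 : T'.neighborSet w₁ = {v₁, w₂} := by
    refine (Set.eq_of_subset_of_ncard_le ?_ ?_ (Set.toFinite _)).symm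
    · intro z hz; rcases hz with h | h <;> subst h
      · exact h1.symm
      · exact h2
    · rw [hdw1, Set.ncard_pair e13]
  have Nw2 : T'.neighborSet w₂ = {w₁, w₃} := by
    refine (Set.eq_of_subset_of_ncard_le ?_ ?_ (Set.toFinite _)).symm
    · intro z hz; rcases hz with h | h <;> subst h
      · exact h2.symm
      · exact h3
    · rw [hdw2, Set.ncard_pair e24]
  have Nw3 : T'.neighborSet w₃ = {w₂, v₂} := by
    refine (Set.eq_of_subset_of_ncard_le ?_ ?_ (Set.toFinite _)).symm
    · intro z hz; rcases hz with h | h <;> subst h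
      · exact h3.symm
      · exact h4
    · rw [hdw3, Set.ncard_pair e35]
  have hT1 : ∀ x y, T'.Adj x y → T.Adj (Sum.inl x) (Sum.inl y) := by
    intro x y h; rw [hadj]; exact Or.inl ⟨x, y, h, rfl, rfl⟩
  have hT2 : ∀ x y, T.Adj (Sum.inl x) (Sum.inl y) → T'.Adj x y := by
    intro x y h; rw [hadj] at h
    rcases h with ⟨x', y', h', hx, hy⟩ | h | h | h | h | h | h <;> simp_all
  have NTr2 : T.neighborSet (Sum.inr 2) = {Sum.inr 0} := by
    ext a
    rw [mem_neighborSet, hadj]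
    constructor
    · rintro (⟨x, y, h', hx, hy⟩ | ⟨h, h'⟩ | ⟨h, h'⟩ | ⟨h, h'⟩ | ⟨h, h'⟩ | ⟨h, h'⟩ | ⟨h, h'⟩) <;>
        simp_all
    · rintro rfl; tauto
  have NTr1 : T.neighborSet (Sum.inr 1) = {Sum.inl v₂} := by
    ext a
    rw [mem_neighborSet, hadj]
    constructor
    · rintro (⟨x, y, h', hx, hy⟩ | ⟨h, h'⟩ | ⟨h, h'⟩ | ⟨h, h'⟩ | ⟨h, h'⟩ | ⟨h, h'⟩ | ⟨h, h'⟩) <;>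
        simp_all
    · rintro rfl; tauto
  have NTr0 : T.neighborSet (Sum.inr 0) = {Sum.inr 2, Sum.inl v₁} := by
    ext a
    rw [mem_neighborSet, hadj]
    constructor
    · rintro (⟨x, y, h', hx, hy⟩ | ⟨h, h'⟩ | ⟨h, h'⟩ | ⟨h, h'⟩ | ⟨h, h'⟩ | ⟨h, h'⟩ | ⟨h, h'⟩) <;>
        simp_all
    · rintro (rfl | rfl) <;> tauto
  have NTx : ∀ x, x ≠ v₁ → x ≠ v₂ →
      T.neighborSet (Sum.inl x) = Sum.inl '' T'.neighborSet x := by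
    intro x hx1 hx2
    ext a
    rw [mem_neighborSet, hadj]
    constructor
    · rintro (⟨x', y', h', hx, hy⟩ | ⟨h, h'⟩ | ⟨h, h'⟩ | ⟨h, h'⟩ | ⟨h, h'⟩ | ⟨h, h'⟩ | ⟨h, h'⟩) <;>
        simp_all
    · rintro ⟨y, hy, rfl⟩; exact Or.inl ⟨x, y, hy, rfl, rfl⟩
  have NTv1 : T.neighborSet (Sum.inl v₁) = {Sum.inl w₁, Sum.inr 0} := by
    ext a
    rw [mem_neighborSet, hadj]
    constructor
    · rintro (⟨x', y', h', hx, hy⟩ | ⟨h, h'⟩ | ⟨h, h'⟩ | ⟨h, h'⟩ | ⟨h, h'⟩ | ⟨h, h'⟩ | ⟨h, h'⟩)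
      · have hxv : x' = v₁ := (Sum.inl.inj hx).symm
        rw [hxv] at h'
        have hyw : y' ∈ T'.neighborSet v₁ := h'
        rw [N1] at hyw
        rw [hy, hyw]
        exact Set.mem_insert _ _
      all_goals simp_all
    · rintro (rfl | rfl)
      · exact Or.inl ⟨v₁, w₁, h1, rfl, rfl⟩
      · tauto
  have NTv2 : T.neighborSet (Sum.inl v₂) = Sum.inl '' T'.neighborSet v₂ ∪ {Sum.inr 1} := by
    ext a
    rw [mem_neighborSet, hadj]
    constructor
    · rintro (⟨x', y', h', hx, hy⟩ | ⟨h, h'⟩ | ⟨h, h'⟩ | ⟨h, h'⟩ | ⟨h, h'⟩ | ⟨h, h'⟩ | ⟨h, h'⟩)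
      · have hxv : x' = v₂ := (Sum.inl.inj hx).symm
        rw [hxv] at h'
        exact Or.inl ⟨y', h', hy.symm⟩
      all_goals simp_all
    · rintro (⟨y, hy, rfl⟩ | rfl)
      · exact Or.inl ⟨v₂, y, hy, rfl, rfl⟩
      · tauto
  -- adjacency restrictions in T'
  have hAdjv₁ : ∀ y, T'.Adj y v₁ → y = w₁ := by
    intro y hy
    have : y ∈ T'.neighborSet v₁ := hy.symm
    rwa [N1] at this
  have hAdjw₁ : ∀ y, T'.Adj y w₁ → y = v₁ ∨ y = w₂ := by
    intro y hy
    have : y ∈ T'.neighborSet w₁ := hy.symm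
    rwa [Nw1] at this
  have hAdjw₂ : ∀ y, T'.Adj y w₂ → y = w₁ ∨ y = w₃ := by
    intro y hy
    have : y ∈ T'.neighborSet w₂ := hy.symm
    rwa [Nw2] at this
  have hAdjw₃ : ∀ y, T'.Adj y w₃ → y = w₂ ∨ y = v₂ := by
    intro y hy
    have : y ∈ T'.neighborSet w₃ := hy.symm
    rwa [Nw3] at this
  -- attainment of gammaK and alphaK
  have gT'mem : ∃ S, IsKDomOn T' 2 Set.univ S ∧ S.ncard = gammaK T' 2 Set.univ := by
    have := Nat.sInf_mem (s := {n | ∃ S, IsKDomOn T' 2 Set.univ S ∧ S.ncard = n})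
      ⟨(Set.univ : Set V).ncard, Set.univ,
        ⟨subset_rfl, fun v _ hv => absurd (Set.mem_univ v) hv⟩, rfl⟩
    exact this
  have gTmem : ∃ S, IsKDomOn T 2 Set.univ S ∧ S.ncard = gammaK T 2 Set.univ := by
    have := Nat.sInf_mem (s := {n | ∃ S, IsKDomOn T 2 Set.univ S ∧ S.ncard = n})
      ⟨(Set.univ : Set (V ⊕ Fin 3)).ncard, Set.univ,
        ⟨subset_rfl, fun v _ hv => absurd (Set.mem_univ v) hv⟩, rfl⟩
    exact this
  have bddT' : BddAbove {n | ∃ S, IsKIndOn T' 2 Set.univ S ∧ S.ncard = n} :=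
    ⟨Nat.card V, fun n ⟨S, _, hn⟩ =>
      hn ▸ (Set.ncard_le_ncard (Set.subset_univ S) (Set.toFinite _)).trans_eq (Set.ncard_univ _)⟩
  have bddT : BddAbove {n | ∃ S, IsKIndOn T 2 Set.univ S ∧ S.ncard = n} :=
    ⟨Nat.card (V ⊕ Fin 3), fun n ⟨S, _, hn⟩ =>
      hn ▸ (Set.ncard_le_ncard (Set.subset_univ S) (Set.toFinite _)).trans_eq (Set.ncard_univ _)⟩
  have aT'mem : ∃ S, IsKIndOn T' 2 Set.univ S ∧ S.ncard = alphaK T' 2 Set.univ := by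
    have := Nat.sSup_mem (s := {n | ∃ S, IsKIndOn T' 2 Set.univ S ∧ S.ncard = n})
      ⟨0, ∅, ⟨Set.empty_subset _, fun v hv => absurd hv (Set.notMem_empty v)⟩,
        Set.ncard_empty _⟩ bddT'
    exact this
  have aTmem : ∃ S, IsKIndOn T 2 Set.univ S ∧ S.ncard = alphaK T 2 Set.univ := by
    have := Nat.sSup_mem (s := {n | ∃ S, IsKIndOn T 2 Set.univ S ∧ S.ncard = n})
      ⟨0, ∅, ⟨Set.empty_subset _, fun v hv => absurd hv (Set.notMem_empty v)⟩,
        Set.ncard_empty _⟩ bddT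
    exact this
  -- v₁ is in every 2-dominating set of T'
  have forced_v1 : ∀ S : Set V, IsKDomOn T' 2 Set.univ S → v₁ ∈ S := by
    rintro S ⟨-, hdom⟩
    by_contra hv
    have h2' := hdom v₁ (Set.mem_univ _) hv
    have hle : (T'.neighborSet v₁ ∩ S).ncard ≤ 1 :=
      ncard_le_one_of_subset_singleton (by rw [N1]; exact Set.inter_subset_left)
    omega
  have key1 : gammaK T 2 Set.univ ≤ gammaK T' 2 Set.univ + 2 := by
    obtain ⟨S', hS'dom, hcard⟩ := gT'mem
    have hv1 : v₁ ∈ S' := forced_v1 _ hS'dom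
    obtain ⟨-, hdom⟩ := hS'dom
    set S : Set (V ⊕ Fin 3) := Sum.inl '' S' ∪ {Sum.inr 1, Sum.inr 2} with hSdef
    have hr1S : (Sum.inr 1 : V ⊕ Fin 3) ∈ S := Or.inr (Set.mem_insert _ _)
    have hr2S : (Sum.inr 2 : V ⊕ Fin 3) ∈ S := Or.inr (Set.mem_insert_of_mem _ rfl)
    have hinlS : ∀ x, x ∈ S' → Sum.inl x ∈ S := fun x hx => Or.inl ⟨x, hx, rfl⟩
    apply Nat.sInf_le
    refine ⟨S, ⟨Set.subset_univ _, ?_⟩, ?_⟩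
    · rintro (x | i) - hvS
      · have hx : x ∉ S' := fun h => hvS (hinlS x h)
        obtain ⟨a, b, ⟨haN, haS⟩, ⟨hbN, hbS⟩, hab⟩ :=
          exists_two' (Set.toFinite _) (hdom x (Set.mem_univ _) hx)
        refine two_le_ncard' (Set.toFinite _) (a := Sum.inl a) (b := Sum.inl b)
          ⟨hT1 x a haN, hinlS a haS⟩ ⟨hT1 x b hbN, hinlS b hbS⟩ (by simp [hab])
      · have hi : i = 0 ∨ i = 1 ∨ i = 2 := by omega
        rcases hi with rfl | rfl | rfl
        · refine two_le_ncard' (Set.toFinite _) (a := Sum.inr 2) (b := Sum.inl v₁)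
            ⟨?_, hr2S⟩ ⟨?_, hinlS v₁ hv1⟩ (by simp)
          · show Sum.inr 2 ∈ T.neighborSet (Sum.inr 0)
            rw [NTr0]; exact Set.mem_insert _ _
          · show Sum.inl v₁ ∈ T.neighborSet (Sum.inr 0)
            rw [NTr0]; exact Set.mem_insert_of_mem _ rfl
        · exact absurd hr1S hvS
        · exact absurd hr2S hvS
    · have hdisj : Disjoint (Sum.inl '' S') ({Sum.inr 1, Sum.inr 2} : Set (V ⊕ Fin 3)) := by
        rw [Set.disjoint_left]
        rintro a ⟨x, -, rfl⟩ (h | h) <;> simp_all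
      rw [hSdef, Set.ncard_union_eq hdisj (Set.toFinite _) (Set.toFinite _),
        Set.ncard_image_of_injective _ Sum.inl_injective, Set.ncard_pair (by simp), hcard]
  -- further neighbor sets in T
  have NTw1 : T.neighborSet (Sum.inl w₁) = {Sum.inl v₁, Sum.inl w₂} := by
    rw [NTx w₁ e12.symm e25, Nw1, Set.image_insert_eq, Set.image_singleton]
  have NTw2 : T.neighborSet (Sum.inl w₂) = {Sum.inl w₁, Sum.inl w₃} := by
    rw [NTx w₂ e13.symm e35, Nw2, Set.image_insert_eq, Set.image_singleton]
  have NTw3 : T.neighborSet (Sum.inl w₃) = {Sum.inl w₂, Sum.inl v₂} := by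
    rw [NTx w₃ e14.symm e45, Nw3, Set.image_insert_eq, Set.image_singleton]
  -- splitting the vertex set
  have hsplit : ∀ S : Set (V ⊕ Fin 3),
      S.ncard = {x : V | Sum.inl x ∈ S ∧ ¬(x = v₁ ∨ x = w₁ ∨ x = w₂ ∨ x = w₃)}.ncard +
        (S ∩ {Sum.inl v₁, Sum.inl w₁, Sum.inl w₂, Sum.inl w₃,
          Sum.inr 0, Sum.inr 1, Sum.inr 2}).ncard := by
    intro S
    have hU : S = Sum.inl '' {x : V | Sum.inl x ∈ S ∧ ¬(x = v₁ ∨ x = w₁ ∨ x = w₂ ∨ x = w₃)} ∪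
        (S ∩ {Sum.inl v₁, Sum.inl w₁, Sum.inl w₂, Sum.inl w₃,
          Sum.inr 0, Sum.inr 1, Sum.inr 2}) := by
      ext a
      cases a with
      | inl x =>
        simp only [Set.mem_union, Set.mem_image, Set.mem_setOf_eq, Set.mem_inter_iff,
          Set.mem_insert_iff, Set.mem_singleton_iff]
        constructor
        · intro hxS
          by_cases hx : x = v₁ ∨ x = w₁ ∨ x = w₂ ∨ x = w₃
          · exact Or.inr ⟨hxS, by rcases hx with rfl | rfl | rfl | rfl <;> simp⟩
          · exact Or.inl ⟨x, ⟨hxS, hx⟩, rfl⟩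
        · rintro (⟨y, ⟨hy, -⟩, he⟩ | ⟨h, -⟩)
          · exact (Sum.inl.inj he) ▸ hy
          · exact h
      | inr i =>
        have hi : i = 0 ∨ i = 1 ∨ i = 2 := by omega
        simp only [Set.mem_union, Set.mem_image, Set.mem_setOf_eq, Set.mem_inter_iff,
          Set.mem_insert_iff, Set.mem_singleton_iff]
        constructor
        · intro hS
          exact Or.inr ⟨hS, by rcases hi with rfl | rfl | rfl <;> simp⟩
        · rintro (⟨y, -, he⟩ | ⟨h, -⟩)
          · exact absurd he (by simp)
          · exact h
    calc S.ncard
        = (Sum.inl '' {x : V | Sum.inl x ∈ S ∧ ¬(x = v₁ ∨ x = w₁ ∨ x = w₂ ∨ x = w₃)} ∪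
            (S ∩ {Sum.inl v₁, Sum.inl w₁, Sum.inl w₂, Sum.inl w₃,
              Sum.inr 0, Sum.inr 1, Sum.inr 2})).ncard := by rw [← hU]
      _ = _ := by
          rw [Set.ncard_union_eq ?disj (Set.toFinite _) (Set.toFinite _),
            Set.ncard_image_of_injective _ Sum.inl_injective]
          case disj =>
            rw [Set.disjoint_left]
            rintro a ⟨y, ⟨-, hy⟩, rfl⟩ ⟨-, hmem⟩
            simp only [Set.mem_insert_iff, Set.mem_singleton_iff, Sum.inl.injEq,
              reduceCtorEq, or_false] at hmem
            exact hy hmem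
  have key2 : gammaK T' 2 Set.univ + 2 ≤ gammaK T 2 Set.univ := by
    obtain ⟨S, ⟨-, hdom⟩, hScard⟩ := gTmem
    have hs := hsplit S
    set RS := {x : V | Sum.inl x ∈ S ∧ ¬(x = v₁ ∨ x = w₁ ∨ x = w₂ ∨ x = w₃)} with hRSdef
    set L := ({Sum.inl v₁, Sum.inl w₁, Sum.inl w₂, Sum.inl w₃,
      Sum.inr 0, Sum.inr 1, Sum.inr 2} : Set (V ⊕ Fin 3)) with hLdef
    have hv2RS : Sum.inl v₂ ∈ S → v₂ ∈ RS := by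
      intro h
      exact ⟨h, by simp [e15.symm, e25.symm, e35.symm, e45.symm]⟩
    -- rest vertices are dominated
    have hrest : ∀ S' : Set V, RS ⊆ S' →
        ∀ x, ¬(x = v₁ ∨ x = w₁ ∨ x = w₂ ∨ x = w₃ ∨ x = v₂) → x ∉ S' →
        2 ≤ (T'.neighborSet x ∩ S').ncard := by
      intro S' hRS x hx hxS'
      push_neg at hx
      obtain ⟨hx1, hx2, hx3, hx4, hx5⟩ := hx
      have hxS : Sum.inl x ∉ S := fun h => hxS' (hRS ⟨h, by tauto⟩)
      have h2' := hdom (Sum.inl x) (Set.mem_univ _) hxS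
      rw [NTx x hx1 hx5] at h2'
      obtain ⟨a, b, ⟨haN, haS⟩, ⟨hbN, hbS⟩, hab⟩ := exists_two' (Set.toFinite _) h2'
      obtain ⟨y, hyN, rfl⟩ := haN
      obtain ⟨z, hzN, rfl⟩ := hbN
      have hyz : y ≠ z := fun h => hab (h ▸ rfl)
      have hmem : ∀ u, u ∈ T'.neighborSet x → Sum.inl u ∈ S → u ∈ S' := by
        intro u huN huS
        refine hRS ⟨huS, ?_⟩
        rintro (rfl | rfl | rfl | rfl)
        · exact hx2 (hAdjv₁ x huN)
        · rcases hAdjw₁ x huN with rfl | rfl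
          · exact hx1 rfl
          · exact hx3 rfl
        · rcases hAdjw₂ x huN with rfl | rfl
          · exact hx2 rfl
          · exact hx4 rfl
        · rcases hAdjw₃ x huN with rfl | rfl
          · exact hx3 rfl
          · exact hx5 rfl
      exact two_le_ncard' (Set.toFinite _) ⟨hyN, hmem y hyN haS⟩ ⟨hzN, hmem z hzN hbS⟩ hyz
    -- forced vertices
    have hSr2 : (Sum.inr 2 : V ⊕ Fin 3) ∈ S := by
      by_contra h
      have h2' := hdom _ (Set.mem_univ _) h
      have hle : (T.neighborSet (Sum.inr 2) ∩ S).ncard ≤ 1 :=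
        ncard_le_one_of_subset_singleton (by rw [NTr2]; exact Set.inter_subset_left)
      omega
    have hSr1 : (Sum.inr 1 : V ⊕ Fin 3) ∈ S := by
      by_contra h
      have h2' := hdom _ (Set.mem_univ _) h
      have hle : (T.neighborSet (Sum.inr 1) ∩ S).ncard ≤ 1 :=
        ncard_le_one_of_subset_singleton (by rw [NTr1]; exact Set.inter_subset_left)
      omega
    have htwoL : (Sum.inl v₁ ∈ S ∧ (Sum.inl w₁ ∈ S ∨ Sum.inl w₂ ∈ S)) ∨
        (Sum.inl v₁ ∉ S ∧ Sum.inr 0 ∈ S ∧ Sum.inl w₁ ∈ S) := by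
      by_cases hv1 : Sum.inl v₁ ∈ S
      · refine Or.inl ⟨hv1, ?_⟩
        by_cases hw1 : Sum.inl w₁ ∈ S
        · exact Or.inl hw1
        · right
          have h2' := hdom _ (Set.mem_univ _) hw1
          rw [NTw1] at h2'
          have := (pair_sub' Set.inter_subset_left (by simp [e13]) h2').2
          exact this.2
      · refine Or.inr ⟨hv1, ?_⟩
        have h2' := hdom _ (Set.mem_univ _) hv1
        rw [NTv1] at h2'
        have hp := pair_sub' Set.inter_subset_left (by simp) h2'
        exact ⟨hp.2.2, hp.1.2⟩
    have hw3S : Sum.inl v₂ ∉ S → Sum.inl w₃ ∈ S := by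
      intro hv2 
      by_contra h
      have h2' := hdom _ (Set.mem_univ _) h
      have hle : (T.neighborSet (Sum.inl w₃) ∩ S).ncard ≤ 1 := by
        apply ncard_le_one_of_subset_singleton (a := Sum.inl w₂)
        rw [NTw3]
        rintro a ⟨(rfl | rfl), haS⟩
        · rfl
        · exact absurd haS hv2
      omega
    -- bounds on |S ∩ L|
    have hL4 : 4 ≤ (S ∩ L).ncard := by
      have hr1L : (Sum.inr 1 : V ⊕ Fin 3) ∈ L := by simp [hLdef]
      have hr2L : (Sum.inr 2 : V ⊕ Fin 3) ∈ L := by simp [hLdef]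
      rcases htwoL with ⟨hv1, hw1 | hw2⟩ | ⟨-, hr0, hw1⟩
      · calc 4 = ({Sum.inr 1, Sum.inr 2, Sum.inl v₁, Sum.inl w₁} : Set (V ⊕ Fin 3)).ncard :=
              (ncard4' (by simp) (by simp) (by simp) (by simp) (by simp) (by simp [e12])).symm
          _ ≤ _ := by
              apply Set.ncard_le_ncard _ (Set.toFinite _)
              rintro a (rfl | rfl | rfl | rfl)
              · exact ⟨hSr1, hr1L⟩
              · exact ⟨hSr2, hr2L⟩
              · exact ⟨hv1, by simp [hLdef]⟩
              · exact ⟨hw1, by simp [hLdef]⟩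
      · calc 4 = ({Sum.inr 1, Sum.inr 2, Sum.inl v₁, Sum.inl w₂} : Set (V ⊕ Fin 3)).ncard :=
              (ncard4' (by simp) (by simp) (by simp) (by simp) (by simp) (by simp [e13])).symm
          _ ≤ _ := by
              apply Set.ncard_le_ncard _ (Set.toFinite _)
              rintro a (rfl | rfl | rfl | rfl)
              · exact ⟨hSr1, hr1L⟩
              · exact ⟨hSr2, hr2L⟩
              · exact ⟨hv1, by simp [hLdef]⟩
              · exact ⟨hw2, by simp [hLdef]⟩
      · calc 4 = ({Sum.inr 1, Sum.inr 2, Sum.inr 0, Sum.inl w₁} : Set (V ⊕ Fin 3)).ncard :=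
              (ncard4' (by simp) (by simp) (by simp) (by simp) (by simp) (by simp)).symm
          _ ≤ _ := by
              apply Set.ncard_le_ncard _ (Set.toFinite _)
              rintro a (rfl | rfl | rfl | rfl)
              · exact ⟨hSr1, hr1L⟩
              · exact ⟨hSr2, hr2L⟩
              · exact ⟨hr0, by simp [hLdef]⟩
              · exact ⟨hw1, by simp [hLdef]⟩
    have hL5 : Sum.inl v₂ ∉ S → 5 ≤ (S ∩ L).ncard := by
      intro hv2
      have hw3 := hw3S hv2
      have hr1L : (Sum.inr 1 : V ⊕ Fin 3) ∈ L := by simp [hLdef]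
      have hr2L : (Sum.inr 2 : V ⊕ Fin 3) ∈ L := by simp [hLdef]
      rcases htwoL with ⟨hv1, hw1 | hw2⟩ | ⟨-, hr0, hw1⟩
      · calc 5 = ({Sum.inr 1, Sum.inr 2, Sum.inl w₃, Sum.inl v₁, Sum.inl w₁} :
                Set (V ⊕ Fin 3)).ncard :=
              (ncard5' (by simp) (by simp) (by simp) (by simp) (by simp) (by simp) (by simp)
                (by simp [e14.symm]) (by simp [e24.symm]) (by simp [e12])).symm
          _ ≤ _ := by
              apply Set.ncard_le_ncard _ (Set.toFinite _)
              rintro a (rfl | rfl | rfl | rfl | rfl)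
              · exact ⟨hSr1, hr1L⟩
              · exact ⟨hSr2, hr2L⟩
              · exact ⟨hw3, by simp [hLdef]⟩
              · exact ⟨hv1, by simp [hLdef]⟩
              · exact ⟨hw1, by simp [hLdef]⟩
      · calc 5 = ({Sum.inr 1, Sum.inr 2, Sum.inl w₃, Sum.inl v₁, Sum.inl w₂} :
                Set (V ⊕ Fin 3)).ncard :=
              (ncard5' (by simp) (by simp) (by simp) (by simp) (by simp) (by simp) (by simp)
                (by simp [e14.symm]) (by simp [e34.symm]) (by simp [e13])).symm
          _ ≤ _ := by
              apply Set.ncard_le_ncard _ (Set.toFinite _)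
              rintro a (rfl | rfl | rfl | rfl | rfl)
              · exact ⟨hSr1, hr1L⟩
              · exact ⟨hSr2, hr2L⟩
              · exact ⟨hw3, by simp [hLdef]⟩
              · exact ⟨hv1, by simp [hLdef]⟩
              · exact ⟨hw2, by simp [hLdef]⟩
      · calc 5 = ({Sum.inr 1, Sum.inr 2, Sum.inl w₃, Sum.inr 0, Sum.inl w₁} :
                Set (V ⊕ Fin 3)).ncard :=
              (ncard5' (by simp) (by simp) (by simp) (by simp) (by simp) (by simp) (by simp)
                (by simp) (by simp [e24.symm]) (by simp)).symm
          _ ≤ _ := by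
              apply Set.ncard_le_ncard _ (Set.toFinite _)
              rintro a (rfl | rfl | rfl | rfl | rfl)
              · exact ⟨hSr1, hr1L⟩
              · exact ⟨hSr2, hr2L⟩
              · exact ⟨hw3, by simp [hLdef]⟩
              · exact ⟨hr0, by simp [hLdef]⟩
              · exact ⟨hw1, by simp [hLdef]⟩
    by_cases hv2S : Sum.inl v₂ ∈ S
    · -- case 1 : pattern {v₁, w₂}
      set S' : Set V := RS ∪ {v₁, w₂} with hS'def
      have hRSsub : RS ⊆ S' := Set.subset_union_left
      have hv1S' : v₁ ∈ S' := Or.inr (Set.mem_insert _ _)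
      have hw2S' : w₂ ∈ S' := Or.inr (Set.mem_insert_of_mem _ rfl)
      have hv2S' : v₂ ∈ S' := hRSsub (hv2RS hv2S)
      have hdomS' : IsKDomOn T' 2 Set.univ S' := by
        refine ⟨Set.subset_univ _, ?_⟩
        intro x _ hxS'
        by_cases hx1 : x = v₁
        · exact absurd (hx1 ▸ hv1S') hxS'
        by_cases hx2 : x = w₁
        · subst hx2
          refine two_le_ncard' (Set.toFinite _) (a := v₁) (b := w₂) ⟨?_, hv1S'⟩ ⟨?_, hw2S'⟩ e13
          · rw [Nw1]; exact Set.mem_insert _ _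
          · rw [Nw1]; exact Set.mem_insert_of_mem _ rfl
        by_cases hx3 : x = w₂
        · exact absurd (hx3 ▸ hw2S') hxS'
        by_cases hx4 : x = w₃
        · subst hx4
          refine two_le_ncard' (Set.toFinite _) (a := w₂) (b := v₂) ⟨?_, hw2S'⟩ ⟨?_, hv2S'⟩ e35
          · rw [Nw3]; exact Set.mem_insert _ _
          · rw [Nw3]; exact Set.mem_insert_of_mem _ rfl
        by_cases hx5 : x = v₂
        · exact absurd (hx5 ▸ hv2S') hxS'
        exact hrest S' hRSsub x (by rintro (h|h|h|h|h); exacts [hx1 h, hx2 h, hx3 h, hx4 h, hx5 h]) hxS'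
      have hcard : S'.ncard ≤ RS.ncard + 2 := by
        calc S'.ncard ≤ RS.ncard + ({v₁, w₂} : Set V).ncard := Set.ncard_union_le _ _
          _ ≤ RS.ncard + 2 := by rw [Set.ncard_pair e13]
      have hgle : gammaK T' 2 Set.univ ≤ S'.ncard := Nat.sInf_le ⟨S', hdomS', rfl⟩
      omega
    · have hL5' := hL5 hv2S
      by_cases hext : ∃ y, T'.Adj v₂ y ∧ Sum.inl y ∈ S ∧ y ≠ w₃
      · -- case 2 : pattern {v₁, w₁, w₃}
        obtain ⟨y, hyadj, hyS, hyw3⟩ := hext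
        set S' : Set V := RS ∪ {v₁, w₁, w₃} with hS'def
        have hRSsub : RS ⊆ S' := Set.subset_union_left
        have hv1S' : v₁ ∈ S' := Or.inr (Set.mem_insert _ _)
        have hw1S' : w₁ ∈ S' := Or.inr (Set.mem_insert_of_mem _ (Set.mem_insert _ _))
        have hw3S' : w₃ ∈ S' := Or.inr (Set.mem_insert_of_mem _ (Set.mem_insert_of_mem _ rfl))
        have hyS' : y ∈ S' := by
          refine hRSsub ⟨hyS, ?_⟩
          rintro (rfl | rfl | rfl | rfl)
          · exact e25 (hAdjv₁ v₂ hyadj).symm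
          · rcases hAdjw₁ v₂ hyadj with h | h
            · exact e15 h.symm
            · exact e35 h.symm
          · rcases hAdjw₂ v₂ hyadj with h | h
            · exact e25 h.symm
            · exact e45 h.symm
          · exact hyw3 rfl
        have hdomS' : IsKDomOn T' 2 Set.univ S' := by
          refine ⟨Set.subset_univ _, ?_⟩
          intro x _ hxS'
          by_cases hx1 : x = v₁
          · exact absurd (hx1 ▸ hv1S') hxS'
          by_cases hx2 : x = w₁
          · exact absurd (hx2 ▸ hw1S') hxS'
          by_cases hx3 : x = w₂
          · subst hx3
            refine two_le_ncard' (Set.toFinite _) (a := w₁) (b := w₃)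
              ⟨?_, hw1S'⟩ ⟨?_, hw3S'⟩ e24
            · rw [Nw2]; exact Set.mem_insert _ _
            · rw [Nw2]; exact Set.mem_insert_of_mem _ rfl
          by_cases hx4 : x = w₃
          · exact absurd (hx4 ▸ hw3S') hxS'
          by_cases hx5 : x = v₂
          · subst hx5
            refine two_le_ncard' (Set.toFinite _) (a := w₃) (b := y)
              ⟨h4.symm, hw3S'⟩ ⟨hyadj, hyS'⟩ (fun h => hyw3 h.symm)
          exact hrest S' hRSsub x (by rintro (h|h|h|h|h); exacts [hx1 h, hx2 h, hx3 h, hx4 h, hx5 h]) hxS'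
        have hcard : S'.ncard ≤ RS.ncard + 3 := by
          calc S'.ncard ≤ RS.ncard + ({v₁, w₁, w₃} : Set V).ncard := Set.ncard_union_le _ _
            _ ≤ RS.ncard + 3 := by rw [ncard3' e12 e14 e24]
        have hgle : gammaK T' 2 Set.univ ≤ S'.ncard := Nat.sInf_le ⟨S', hdomS', rfl⟩
        omega
      · -- case 3 : pattern {v₁, w₂, v₂}
        set S' : Set V := RS ∪ {v₁, w₂, v₂} with hS'def
        have hRSsub : RS ⊆ S' := Set.subset_union_left
        have hv1S' : v₁ ∈ S' := Or.inr (Set.mem_insert _ _)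
        have hw2S' : w₂ ∈ S' := Or.inr (Set.mem_insert_of_mem _ (Set.mem_insert _ _))
        have hv2S' : v₂ ∈ S' := Or.inr (Set.mem_insert_of_mem _ (Set.mem_insert_of_mem _ rfl))
        have hdomS' : IsKDomOn T' 2 Set.univ S' := by
          refine ⟨Set.subset_univ _, ?_⟩
          intro x _ hxS'
          by_cases hx1 : x = v₁
          · exact absurd (hx1 ▸ hv1S') hxS'
          by_cases hx2 : x = w₁
          · subst hx2
            refine two_le_ncard' (Set.toFinite _) (a := v₁) (b := w₂)
              ⟨?_, hv1S'⟩ ⟨?_, hw2S'⟩ e13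
            · rw [Nw1]; exact Set.mem_insert _ _
            · rw [Nw1]; exact Set.mem_insert_of_mem _ rfl
          by_cases hx3 : x = w₂
          · exact absurd (hx3 ▸ hw2S') hxS'
          by_cases hx4 : x = w₃
          · subst hx4
            refine two_le_ncard' (Set.toFinite _) (a := w₂) (b := v₂)
              ⟨?_, hw2S'⟩ ⟨?_, hv2S'⟩ e35
            · rw [Nw3]; exact Set.mem_insert _ _
            · rw [Nw3]; exact Set.mem_insert_of_mem _ rfl
          by_cases hx5 : x = v₂
          · exact absurd (hx5 ▸ hv2S') hxS'
          exact hrest S' hRSsub x (by rintro (h|h|h|h|h); exacts [hx1 h, hx2 h, hx3 h, hx4 h, hx5 h]) hxS'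
        have hcard : S'.ncard ≤ RS.ncard + 3 := by
          calc S'.ncard ≤ RS.ncard + ({v₁, w₂, v₂} : Set V).ncard := Set.ncard_union_le _ _
            _ ≤ RS.ncard + 3 := by rw [ncard3' e13 e15 e35]
        have hgle : gammaK T' 2 Set.univ ≤ S'.ncard := Nat.sInf_le ⟨S', hdomS', rfl⟩
        omega
  have key3 : alphaK T 2 Set.univ ≤ alphaK T' 2 Set.univ + 2 := by
    refine csSup_le ⟨0, ∅, ⟨Set.empty_subset _,
      fun v hv => absurd hv (Set.notMem_empty v)⟩, Set.ncard_empty _⟩ ?_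
    rintro n ⟨I, ⟨-, hind⟩, rfl⟩
    have hs := hsplit I
    set R := {x : V | Sum.inl x ∈ I ∧ ¬(x = v₁ ∨ x = w₁ ∨ x = w₂ ∨ x = w₃)} with hRdef
    set L := ({Sum.inl v₁, Sum.inl w₁, Sum.inl w₂, Sum.inl w₃,
      Sum.inr 0, Sum.inr 1, Sum.inr 2} : Set (V ⊕ Fin 3)) with hLdef
    have hv1R : v₁ ∉ R := fun h => h.2 (Or.inl rfl)
    have hw1R : w₁ ∉ R := fun h => h.2 (Or.inr (Or.inl rfl))
    have hw2R : w₂ ∉ R := fun h => h.2 (Or.inr (Or.inr (Or.inl rfl)))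
    have hw3R : w₃ ∉ R := fun h => h.2 (Or.inr (Or.inr (Or.inr rfl)))
    -- bound on the A part
    have hA : (I ∩ ({Sum.inr 2, Sum.inr 0, Sum.inl v₁} : Set (V ⊕ Fin 3))).ncard ≤ 2 := by
      by_cases hr0 : (Sum.inr 0 : V ⊕ Fin 3) ∈ I
      · have h1' := hind _ hr0
        by_cases hr2 : (Sum.inr 2 : V ⊕ Fin 3) ∈ I
        · have hnv1 : Sum.inl v₁ ∉ I := by
            intro hv1
            have h2' : 2 ≤ (T.neighborSet (Sum.inr 0) ∩ I).ncard := by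
              refine two_le_ncard' (Set.toFinite _) ⟨?_, hr2⟩ ⟨?_, hv1⟩ (by simp)
              · rw [NTr0]; exact Set.mem_insert _ _
              · rw [NTr0]; exact Set.mem_insert_of_mem _ rfl
            omega
          refine le_trans (Set.ncard_le_ncard ?_ (Set.toFinite _))
            (le_of_eq (Set.ncard_pair
              (show (Sum.inr 2 : V ⊕ Fin 3) ≠ Sum.inr 0 by simp)))
          rintro a ⟨haI, (rfl | rfl | rfl)⟩
          · exact Set.mem_insert _ _
          · exact Set.mem_insert_of_mem _ rfl
          · exact absurd haI hnv1
        · refine le_trans (Set.ncard_le_ncard ?_ (Set.toFinite _))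
            (le_of_eq (Set.ncard_pair
              (show (Sum.inr 0 : V ⊕ Fin 3) ≠ Sum.inl v₁ by simp)))
          rintro a ⟨haI, (rfl | rfl | rfl)⟩
          · exact absurd haI hr2
          · exact Set.mem_insert _ _
          · exact Set.mem_insert_of_mem _ rfl
      · refine le_trans (Set.ncard_le_ncard ?_ (Set.toFinite _))
          (le_of_eq (Set.ncard_pair
            (show (Sum.inr 2 : V ⊕ Fin 3) ≠ Sum.inl v₁ by simp)))
        rintro a ⟨haI, (rfl | rfl | rfl)⟩
        · exact Set.mem_insert _ _
        · exact absurd haI hr0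
        · exact Set.mem_insert_of_mem _ rfl
    have hmsplit : (I ∩ L).ncard ≤
        (I ∩ ({Sum.inr 2, Sum.inr 0, Sum.inl v₁} : Set (V ⊕ Fin 3))).ncard +
        (I ∩ ({Sum.inl w₁, Sum.inl w₂, Sum.inl w₃, Sum.inr 1} : Set (V ⊕ Fin 3))).ncard := by
      refine le_trans (Set.ncard_le_ncard ?_ (Set.toFinite _)) (Set.ncard_union_le _ _)
      rintro a ⟨haI, (rfl | rfl | rfl | rfl | rfl | rfl | rfl)⟩
      · exact Or.inl ⟨haI, by simp⟩
      · exact Or.inr ⟨haI, by simp⟩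
      · exact Or.inr ⟨haI, by simp⟩
      · exact Or.inr ⟨haI, by simp⟩
      · exact Or.inl ⟨haI, by simp⟩
      · exact Or.inr ⟨haI, by simp⟩
      · exact Or.inl ⟨haI, by simp⟩
    -- pull back independence bound to R
    have hRbound : ∀ x, Sum.inl x ∈ I → (T'.neighborSet x ∩ R).ncard ≤ 1 := by
      intro x hxI
      have himg : Sum.inl '' (T'.neighborSet x ∩ R) ⊆ T.neighborSet (Sum.inl x) ∩ I := by
        rintro a ⟨y, ⟨hyN, hyR⟩, rfl⟩
        exact ⟨hT1 x y hyN, hyR.1⟩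
      calc (T'.neighborSet x ∩ R).ncard
          = (Sum.inl '' (T'.neighborSet x ∩ R)).ncard :=
            (Set.ncard_image_of_injective _ Sum.inl_injective).symm
        _ ≤ (T.neighborSet (Sum.inl x) ∩ I).ncard := Set.ncard_le_ncard himg (Set.toFinite _)
        _ ≤ 1 := hind _ hxI
    by_cases hcase : Sum.inl v₂ ∈ I ∧ ∃ y, T'.Adj v₂ y ∧ Sum.inl y ∈ I ∧ y ≠ w₃
    · -- case A
      obtain ⟨hv2I, y, hyadj, hyI, hyw3⟩ := hcase
      have hymem : Sum.inl y ∈ T.neighborSet (Sum.inl v₂) := by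
        rw [NTv2]; exact Or.inl ⟨y, hyadj, rfl⟩
      have hw3nI : Sum.inl w₃ ∉ I := by
        intro hw3
        have h2' : 2 ≤ (T.neighborSet (Sum.inl v₂) ∩ I).ncard := by
          refine two_le_ncard' (Set.toFinite _) ⟨?_, hw3⟩ ⟨hymem, hyI⟩
            (fun h => hyw3 (Sum.inl.inj h).symm)
          rw [NTv2]; exact Or.inl ⟨w₃, h4.symm, rfl⟩
        have := hind _ hv2I
        omega
      have hr1nI : (Sum.inr 1 : V ⊕ Fin 3) ∉ I := by
        intro hr1
        have h2' : 2 ≤ (T.neighborSet (Sum.inl v₂) ∩ I).ncard := by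
          refine two_le_ncard' (Set.toFinite _) ⟨?_, hr1⟩ ⟨hymem, hyI⟩ (by simp)
          rw [NTv2]; exact Or.inr rfl
        have := hind _ hv2I
        omega
      have hB : (I ∩ ({Sum.inl w₁, Sum.inl w₂, Sum.inl w₃, Sum.inr 1} :
          Set (V ⊕ Fin 3))).ncard ≤ 2 := by
        refine le_trans (Set.ncard_le_ncard ?_ (Set.toFinite _))
          (le_of_eq (Set.ncard_pair
            (show (Sum.inl w₁ : V ⊕ Fin 3) ≠ Sum.inl w₂ by simp [e23])))
        rintro a ⟨haI, (rfl | rfl | rfl | rfl)⟩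
        · exact Set.mem_insert _ _
        · exact Set.mem_insert_of_mem _ rfl
        · exact absurd haI hw3nI
        · exact absurd haI hr1nI
      set I' : Set V := R ∪ {v₁, w₂} with hI'def
      have hw3nI' : w₃ ∉ I' := by
        rintro (h | h)
        · exact hw3R h
        · rcases h with h | h
          · exact e14 h.symm
          · exact e34 h.symm
      have hindI' : IsKIndOn T' 2 Set.univ I' := by
        refine ⟨Set.subset_univ _, ?_⟩
        rintro x (hxR | hmem)
        · have hsub : T'.neighborSet x ∩ I' ⊆ T'.neighborSet x ∩ R := by
            rintro z ⟨hzN, (hzR | hzP)⟩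
            · exact ⟨hzN, hzR⟩
            · exfalso
              rcases hzP with rfl | rfl
              · exact hxR.2 (Or.inr (Or.inl (hAdjv₁ x hzN)))
              · rcases hAdjw₂ x hzN with rfl | rfl
                · exact hxR.2 (Or.inr (Or.inl rfl))
                · exact hxR.2 (Or.inr (Or.inr (Or.inr rfl)))
          exact le_trans (Set.ncard_le_ncard hsub (Set.toFinite _)) (hRbound x hxR.1)
        · rcases hmem with rfl | rfl
          · exact ncard_le_one_of_subset_singleton (a := w₁)
              (by rw [N1]; exact Set.inter_subset_left)
          · refine ncard_le_one_of_subset_singleton (a := w₁) ?_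
            rw [Nw2]
            rintro z ⟨(rfl | rfl), hzI'⟩
            · rfl
            · exact absurd hzI' hw3nI'
      have hI'card : I'.ncard = R.ncard + 2 := by
        rw [hI'def, Set.ncard_union_eq ?disj (Set.toFinite _) (Set.toFinite _),
          Set.ncard_pair e13]
        case disj =>
          rw [Set.disjoint_left]
          rintro z hzR (rfl | rfl)
          · exact hv1R hzR
          · exact hw2R hzR
      have hle : I'.ncard ≤ alphaK T' 2 Set.univ := le_csSup bddT' ⟨I', hindI', rfl⟩
      omega
    · -- case B
      have hB : (I ∩ ({Sum.inl w₁, Sum.inl w₂, Sum.inl w₃, Sum.inr 1} :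
          Set (V ⊕ Fin 3))).ncard ≤ 3 := by
        by_cases hw2I : Sum.inl w₂ ∈ I
        · have h1' := hind _ hw2I
          by_cases hw1I : Sum.inl w₁ ∈ I
          · have hw3nI : Sum.inl w₃ ∉ I := by
              intro hw3
              have h2' : 2 ≤ (T.neighborSet (Sum.inl w₂) ∩ I).ncard := by
                refine two_le_ncard' (Set.toFinite _) ⟨?_, hw1I⟩ ⟨?_, hw3⟩ (by simp [e24])
                · rw [NTw2]; exact Set.mem_insert _ _
                · rw [NTw2]; exact Set.mem_insert_of_mem _ rfl
              omega
            refine le_trans (Set.ncard_le_ncard ?_ (Set.toFinite _))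
              (le_of_eq (ncard3'
                (show (Sum.inl w₁ : V ⊕ Fin 3) ≠ Sum.inl w₂ by simp [e23])
                (show (Sum.inl w₁ : V ⊕ Fin 3) ≠ Sum.inr 1 by simp) (by simp)))
            rintro a ⟨haI, (rfl | rfl | rfl | rfl)⟩
            · exact Set.mem_insert _ _
            · exact Set.mem_insert_of_mem _ (Set.mem_insert _ _)
            · exact absurd haI hw3nI
            · exact Set.mem_insert_of_mem _ (Set.mem_insert_of_mem _ rfl)
          · refine le_trans (Set.ncard_le_ncard ?_ (Set.toFinite _))
              (le_of_eq (ncard3'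
                (show (Sum.inl w₂ : V ⊕ Fin 3) ≠ Sum.inl w₃ by simp [e34])
                (show (Sum.inl w₂ : V ⊕ Fin 3) ≠ Sum.inr 1 by simp) (by simp)))
            rintro a ⟨haI, (rfl | rfl | rfl | rfl)⟩
            · exact absurd haI hw1I
            · exact Set.mem_insert _ _
            · exact Set.mem_insert_of_mem _ (Set.mem_insert _ _)
            · exact Set.mem_insert_of_mem _ (Set.mem_insert_of_mem _ rfl)
        · refine le_trans (Set.ncard_le_ncard ?_ (Set.toFinite _))
            (le_of_eq (ncard3'
              (show (Sum.inl w₁ : V ⊕ Fin 3) ≠ Sum.inl w₃ by simp [e24])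
              (show (Sum.inl w₁ : V ⊕ Fin 3) ≠ Sum.inr 1 by simp) (by simp)))
          rintro a ⟨haI, (rfl | rfl | rfl | rfl)⟩
          · exact Set.mem_insert _ _
          · exact absurd haI hw2I
          · exact Set.mem_insert_of_mem _ (Set.mem_insert _ _)
          · exact Set.mem_insert_of_mem _ (Set.mem_insert_of_mem _ rfl)
      by_cases hv2I : Sum.inl v₂ ∈ I
      · -- v₂ ∈ I but no external neighbour of v₂ in I
        have hnoext : ∀ z, T'.Adj v₂ z → Sum.inl z ∈ I → z = w₃ := by
          intro z hz hzI
          by_contra h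
          exact hcase ⟨hv2I, z, hz, hzI, h⟩
        set I' : Set V := R ∪ {v₁, w₁, w₃} with hI'def
        have hw2nI' : w₂ ∉ I' := by
          rintro (h | h)
          · exact hw2R h
          · rcases h with h | h | h
            · exact e13 h.symm
            · exact e23 h.symm
            · exact e34 h
        have hindI' : IsKIndOn T' 2 Set.univ I' := by
          refine ⟨Set.subset_univ _, ?_⟩
          rintro x (hxR | hmem)
          · by_cases hxv2 : x = v₂
            · rw [hxv2]
              refine ncard_le_one_of_subset_singleton (a := w₃) ?_
              rintro z ⟨hzN, (hzR | hzP)⟩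
              · exact absurd (hnoext z hzN hzR.1) (fun h => hzR.2 (h ▸ (by simp)))
              · rcases hzP with rfl | rfl | rfl
                · exact absurd (hAdjv₁ v₂ hzN) e25.symm
                · rcases hAdjw₁ v₂ hzN with h | h
                  · exact absurd h.symm e15
                  · exact absurd h.symm e35
                · rfl
            · have hsub : T'.neighborSet x ∩ I' ⊆ T'.neighborSet x ∩ R := by
                rintro z ⟨hzN, (hzR | hzP)⟩
                · exact ⟨hzN, hzR⟩
                · exfalso
                  rcases hzP with rfl | rfl | rfl
                  · exact hxR.2 (Or.inr (Or.inl (hAdjv₁ x hzN)))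
                  · rcases hAdjw₁ x hzN with rfl | rfl
                    · exact hxR.2 (Or.inl rfl)
                    · exact hxR.2 (Or.inr (Or.inr (Or.inl rfl)))
                  · rcases hAdjw₃ x hzN with rfl | rfl
                    · exact hxR.2 (Or.inr (Or.inr (Or.inl rfl)))
                    · exact hxv2 rfl
              exact le_trans (Set.ncard_le_ncard hsub (Set.toFinite _)) (hRbound x hxR.1)
          · rcases hmem with rfl | rfl | rfl
            · exact ncard_le_one_of_subset_singleton (a := w₁)
                (by rw [N1]; exact Set.inter_subset_left)
            · refine ncard_le_one_of_subset_singleton (a := v₁) ?_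
              rw [Nw1]
              rintro z ⟨(rfl | rfl), hzI'⟩
              · rfl
              · exact absurd hzI' hw2nI'
            · refine ncard_le_one_of_subset_singleton (a := v₂) ?_
              rw [Nw3]
              rintro z ⟨(rfl | rfl), hzI'⟩
              · exact absurd hzI' hw2nI'
              · rfl
        have hI'card : I'.ncard = R.ncard + 3 := by
          rw [hI'def, Set.ncard_union_eq ?disj (Set.toFinite _) (Set.toFinite _),
            ncard3' e12 e14 e24]
          case disj =>
            rw [Set.disjoint_left]
            rintro z hzR (rfl | rfl | rfl)
            · exact hv1R hzR
            · exact hw1R hzR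
            · exact hw3R hzR
        have hle : I'.ncard ≤ alphaK T' 2 Set.univ := le_csSup bddT' ⟨I', hindI', rfl⟩
        omega
      · -- v₂ ∉ I
        set I' : Set V := R ∪ {v₁, w₂, w₃} with hI'def
        have hw1nI' : w₁ ∉ I' := by
          rintro (h | h)
          · exact hw1R h
          · rcases h with h | h | h
            · exact e12 h.symm
            · exact e23 h
            · exact e24 h
        have hv2nI' : v₂ ∉ I' := by
          rintro (h | h)
          · exact hv2I h.1
          · rcases h with h | h | h
            · exact e15 h.symm
            · exact e35 h.symm
            · exact e45 h.symm
        have hv2nR : v₂ ∉ R := fun h => hv2I h.1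
        have hindI' : IsKIndOn T' 2 Set.univ I' := by
          refine ⟨Set.subset_univ _, ?_⟩
          rintro x (hxR | hmem)
          · have hsub : T'.neighborSet x ∩ I' ⊆ T'.neighborSet x ∩ R := by
              rintro z ⟨hzN, (hzR | hzP)⟩
              · exact ⟨hzN, hzR⟩
              · exfalso
                rcases hzP with rfl | rfl | rfl
                · exact hxR.2 (Or.inr (Or.inl (hAdjv₁ x hzN)))
                · rcases hAdjw₂ x hzN with rfl | rfl
                  · exact hxR.2 (Or.inr (Or.inl rfl))
                  · exact hxR.2 (Or.inr (Or.inr (Or.inr rfl)))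
                · rcases hAdjw₃ x hzN with rfl | rfl
                  · exact hxR.2 (Or.inr (Or.inr (Or.inl rfl)))
                  · exact hv2nR hxR
            exact le_trans (Set.ncard_le_ncard hsub (Set.toFinite _)) (hRbound x hxR.1)
          · rcases hmem with rfl | rfl | rfl
            · exact ncard_le_one_of_subset_singleton (a := w₁)
                (by rw [N1]; exact Set.inter_subset_left)
            · refine ncard_le_one_of_subset_singleton (a := w₃) ?_
              rw [Nw2]
              rintro z ⟨(rfl | rfl), hzI'⟩
              · exact absurd hzI' hw1nI'
              · rfl
            · refine ncard_le_one_of_subset_singleton (a := w₂) ?_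
              rw [Nw3]
              rintro z ⟨(rfl | rfl), hzI'⟩
              · rfl
              · exact absurd hzI' hv2nI'
        have hI'card : I'.ncard = R.ncard + 3 := by
          rw [hI'def, Set.ncard_union_eq ?disj (Set.toFinite _) (Set.toFinite _),
            ncard3' e13 e14 e34]
          case disj =>
            rw [Set.disjoint_left]
            rintro z hzR (rfl | rfl | rfl)
            · exact hv1R hzR
            · exact hw2R hzR
            · exact hw3R hzR
        have hle : I'.ncard ≤ alphaK T' 2 Set.univ := le_csSup bddT' ⟨I', hindI', rfl⟩
        omega
  have key3 : alphaK T 2 Set.univ ≤ alphaK T' 2 Set.univ + 2 := by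
    refine csSup_le ⟨0, ∅, ⟨Set.empty_subset _,
      fun v hv => absurd hv (Set.notMem_empty v)⟩, Set.ncard_empty _⟩ ?_
    rintro n ⟨I, ⟨-, hind⟩, rfl⟩
    have hs := hsplit I
    set R := {x : V | Sum.inl x ∈ I ∧ ¬(x = v₁ ∨ x = w₁ ∨ x = w₂ ∨ x = w₃)} with hRdef
    set L := ({Sum.inl v₁, Sum.inl w₁, Sum.inl w₂, Sum.inl w₃,
      Sum.inr 0, Sum.inr 1, Sum.inr 2} : Set (V ⊕ Fin 3)) with hLdef
    have hv1R : v₁ ∉ R := fun h => h.2 (Or.inl rfl)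
    have hw1R : w₁ ∉ R := fun h => h.2 (Or.inr (Or.inl rfl))
    have hw2R : w₂ ∉ R := fun h => h.2 (Or.inr (Or.inr (Or.inl rfl)))
    have hw3R : w₃ ∉ R := fun h => h.2 (Or.inr (Or.inr (Or.inr rfl)))
    -- bound on the A part
    have hA : (I ∩ ({Sum.inr 2, Sum.inr 0, Sum.inl v₁} : Set (V ⊕ Fin 3))).ncard ≤ 2 := by
      by_cases hr0 : (Sum.inr 0 : V ⊕ Fin 3) ∈ I
      · have h1' := hind _ hr0
        by_cases hr2 : (Sum.inr 2 : V ⊕ Fin 3) ∈ I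
        · have hnv1 : Sum.inl v₁ ∉ I := by
            intro hv1
            have h2' : 2 ≤ (T.neighborSet (Sum.inr 0) ∩ I).ncard := by
              refine two_le_ncard' (Set.toFinite _) ⟨?_, hr2⟩ ⟨?_, hv1⟩ (by simp)
              · rw [NTr0]; exact Set.mem_insert _ _
              · rw [NTr0]; exact Set.mem_insert_of_mem _ rfl
            omega
          refine le_trans (Set.ncard_le_ncard ?_ (Set.toFinite _))
            (le_of_eq (Set.ncard_pair
              (show (Sum.inr 2 : V ⊕ Fin 3) ≠ Sum.inr 0 by simp)))
          rintro a ⟨haI, (rfl | rfl | rfl)⟩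
          · exact Set.mem_insert _ _
          · exact Set.mem_insert_of_mem _ rfl
          · exact absurd haI hnv1
        · refine le_trans (Set.ncard_le_ncard ?_ (Set.toFinite _))
            (le_of_eq (Set.ncard_pair
              (show (Sum.inr 0 : V ⊕ Fin 3) ≠ Sum.inl v₁ by simp)))
          rintro a ⟨haI, (rfl | rfl | rfl)⟩
          · exact absurd haI hr2
          · exact Set.mem_insert _ _
          · exact Set.mem_insert_of_mem _ rfl
      · refine le_trans (Set.ncard_le_ncard ?_ (Set.toFinite _))
          (le_of_eq (Set.ncard_pair
            (show (Sum.inr 2 : V ⊕ Fin 3) ≠ Sum.inl v₁ by simp)))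
        rintro a ⟨haI, (rfl | rfl | rfl)⟩
        · exact Set.mem_insert _ _
        · exact absurd haI hr0
        · exact Set.mem_insert_of_mem _ rfl
    have hmsplit : (I ∩ L).ncard ≤
        (I ∩ ({Sum.inr 2, Sum.inr 0, Sum.inl v₁} : Set (V ⊕ Fin 3))).ncard +
        (I ∩ ({Sum.inl w₁, Sum.inl w₂, Sum.inl w₃, Sum.inr 1} : Set (V ⊕ Fin 3))).ncard := by
      refine le_trans (Set.ncard_le_ncard ?_ (Set.toFinite _)) (Set.ncard_union_le _ _)
      rintro a ⟨haI, (rfl | rfl | rfl | rfl | rfl | rfl | rfl)⟩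
      · exact Or.inl ⟨haI, by simp⟩
      · exact Or.inr ⟨haI, by simp⟩
      · exact Or.inr ⟨haI, by simp⟩
      · exact Or.inr ⟨haI, by simp⟩
      · exact Or.inl ⟨haI, by simp⟩
      · exact Or.inr ⟨haI, by simp⟩
      · exact Or.inl ⟨haI, by simp⟩
    -- pull back independence bound to R
    have hRbound : ∀ x, Sum.inl x ∈ I → (T'.neighborSet x ∩ R).ncard ≤ 1 := by
      intro x hxI
      have himg : Sum.inl '' (T'.neighborSet x ∩ R) ⊆ T.neighborSet (Sum.inl x) ∩ I := by
        rintro a ⟨y, ⟨hyN, hyR⟩, rfl⟩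
        exact ⟨hT1 x y hyN, hyR.1⟩
      calc (T'.neighborSet x ∩ R).ncard
          = (Sum.inl '' (T'.neighborSet x ∩ R)).ncard :=
            (Set.ncard_image_of_injective _ Sum.inl_injective).symm
        _ ≤ (T.neighborSet (Sum.inl x) ∩ I).ncard := Set.ncard_le_ncard himg (Set.toFinite _)
        _ ≤ 1 := hind _ hxI
    by_cases hcase : Sum.inl v₂ ∈ I ∧ ∃ y, T'.Adj v₂ y ∧ Sum.inl y ∈ I ∧ y ≠ w₃
    · -- case A
      obtain ⟨hv2I, y, hyadj, hyI, hyw3⟩ := hcase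
      have hymem : Sum.inl y ∈ T.neighborSet (Sum.inl v₂) := by
        rw [NTv2]; exact Or.inl ⟨y, hyadj, rfl⟩
      have hw3nI : Sum.inl w₃ ∉ I := by
        intro hw3
        have h2' : 2 ≤ (T.neighborSet (Sum.inl v₂) ∩ I).ncard := by
          refine two_le_ncard' (Set.toFinite _) ⟨?_, hw3⟩ ⟨hymem, hyI⟩
            (fun h => hyw3 (Sum.inl.inj h).symm)
          rw [NTv2]; exact Or.inl ⟨w₃, h4.symm, rfl⟩
        have := hind _ hv2I
        omega
      have hr1nI : (Sum.inr 1 : V ⊕ Fin 3) ∉ I := by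
        intro hr1
        have h2' : 2 ≤ (T.neighborSet (Sum.inl v₂) ∩ I).ncard := by
          refine two_le_ncard' (Set.toFinite _) ⟨?_, hr1⟩ ⟨hymem, hyI⟩ (by simp)
          rw [NTv2]; exact Or.inr rfl
        have := hind _ hv2I
        omega
      have hB : (I ∩ ({Sum.inl w₁, Sum.inl w₂, Sum.inl w₃, Sum.inr 1} :
          Set (V ⊕ Fin 3))).ncard ≤ 2 := by
        refine le_trans (Set.ncard_le_ncard ?_ (Set.toFinite _))
          (le_of_eq (Set.ncard_pair
            (show (Sum.inl w₁ : V ⊕ Fin 3) ≠ Sum.inl w₂ by simp [e23])))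
        rintro a ⟨haI, (rfl | rfl | rfl | rfl)⟩
        · exact Set.mem_insert _ _
        · exact Set.mem_insert_of_mem _ rfl
        · exact absurd haI hw3nI
        · exact absurd haI hr1nI
      set I' : Set V := R ∪ {v₁, w₂} with hI'def
      have hw3nI' : w₃ ∉ I' := by
        rintro (h | h)
        · exact hw3R h
        · rcases h with h | h
          · exact e14 h.symm
          · exact e34 h.symm
      have hindI' : IsKIndOn T' 2 Set.univ I' := by
        refine ⟨Set.subset_univ _, ?_⟩
        rintro x (hxR | hmem)
        · have hsub : T'.neighborSet x ∩ I' ⊆ T'.neighborSet x ∩ R := by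
            rintro z ⟨hzN, (hzR | hzP)⟩
            · exact ⟨hzN, hzR⟩
            · exfalso
              rcases hzP with rfl | rfl
              · exact hxR.2 (Or.inr (Or.inl (hAdjv₁ x hzN)))
              · rcases hAdjw₂ x hzN with rfl | rfl
                · exact hxR.2 (Or.inr (Or.inl rfl))
                · exact hxR.2 (Or.inr (Or.inr (Or.inr rfl)))
          exact le_trans (Set.ncard_le_ncard hsub (Set.toFinite _)) (hRbound x hxR.1)
        · rcases hmem with rfl | rfl
          · exact ncard_le_one_of_subset_singleton (a := w₁)
              (by rw [N1]; exact Set.inter_subset_left)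
          · refine ncard_le_one_of_subset_singleton (a := w₁) ?_
            rw [Nw2]
            rintro z ⟨(rfl | rfl), hzI'⟩
            · rfl
            · exact absurd hzI' hw3nI'
      have hI'card : I'.ncard = R.ncard + 2 := by
        rw [hI'def, Set.ncard_union_eq ?disj (Set.toFinite _) (Set.toFinite _),
          Set.ncard_pair e13]
        case disj =>
          rw [Set.disjoint_left]
          rintro z hzR (rfl | rfl)
          · exact hv1R hzR
          · exact hw2R hzR
      have hle : I'.ncard ≤ alphaK T' 2 Set.univ := le_csSup bddT' ⟨I', hindI', rfl⟩
      omega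
    · -- case B
      have hB : (I ∩ ({Sum.inl w₁, Sum.inl w₂, Sum.inl w₃, Sum.inr 1} :
          Set (V ⊕ Fin 3))).ncard ≤ 3 := by
        by_cases hw2I : Sum.inl w₂ ∈ I
        · have h1' := hind _ hw2I
          by_cases hw1I : Sum.inl w₁ ∈ I
          · have hw3nI : Sum.inl w₃ ∉ I := by
              intro hw3
              have h2' : 2 ≤ (T.neighborSet (Sum.inl w₂) ∩ I).ncard := by
                refine two_le_ncard' (Set.toFinite _) ⟨?_, hw1I⟩ ⟨?_, hw3⟩ (by simp [e24])
                · rw [NTw2]; exact Set.mem_insert _ _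
                · rw [NTw2]; exact Set.mem_insert_of_mem _ rfl
              omega
            refine le_trans (Set.ncard_le_ncard ?_ (Set.toFinite _))
              (le_of_eq (ncard3'
                (show (Sum.inl w₁ : V ⊕ Fin 3) ≠ Sum.inl w₂ by simp [e23])
                (show (Sum.inl w₁ : V ⊕ Fin 3) ≠ Sum.inr 1 by simp) (by simp)))
            rintro a ⟨haI, (rfl | rfl | rfl | rfl)⟩
            · exact Set.mem_insert _ _
            · exact Set.mem_insert_of_mem _ (Set.mem_insert _ _)
            · exact absurd haI hw3nI
            · exact Set.mem_insert_of_mem _ (Set.mem_insert_of_mem _ rfl)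
          · refine le_trans (Set.ncard_le_ncard ?_ (Set.toFinite _))
              (le_of_eq (ncard3'
                (show (Sum.inl w₂ : V ⊕ Fin 3) ≠ Sum.inl w₃ by simp [e34])
                (show (Sum.inl w₂ : V ⊕ Fin 3) ≠ Sum.inr 1 by simp) (by simp)))
            rintro a ⟨haI, (rfl | rfl | rfl | rfl)⟩
            · exact absurd haI hw1I
            · exact Set.mem_insert _ _
            · exact Set.mem_insert_of_mem _ (Set.mem_insert _ _)
            · exact Set.mem_insert_of_mem _ (Set.mem_insert_of_mem _ rfl)
        · refine le_trans (Set.ncard_le_ncard ?_ (Set.toFinite _))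
            (le_of_eq (ncard3'
              (show (Sum.inl w₁ : V ⊕ Fin 3) ≠ Sum.inl w₃ by simp [e24])
              (show (Sum.inl w₁ : V ⊕ Fin 3) ≠ Sum.inr 1 by simp) (by simp)))
          rintro a ⟨haI, (rfl | rfl | rfl | rfl)⟩
          · exact Set.mem_insert _ _
          · exact absurd haI hw2I
          · exact Set.mem_insert_of_mem _ (Set.mem_insert _ _)
          · exact Set.mem_insert_of_mem _ (Set.mem_insert_of_mem _ rfl)
      by_cases hv2I : Sum.inl v₂ ∈ I
      · -- v₂ ∈ I but no external neighbour of v₂ in I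
        have hnoext : ∀ z, T'.Adj v₂ z → Sum.inl z ∈ I → z = w₃ := by
          intro z hz hzI
          by_contra h
          exact hcase ⟨hv2I, z, hz, hzI, h⟩
        set I' : Set V := R ∪ {v₁, w₁, w₃} with hI'def
        have hw2nI' : w₂ ∉ I' := by
          rintro (h | h)
          · exact hw2R h
          · rcases h with h | h | h
            · exact e13 h.symm
            · exact e23 h.symm
            · exact e34 h
        have hindI' : IsKIndOn T' 2 Set.univ I' := by
          refine ⟨Set.subset_univ _, ?_⟩
          rintro x (hxR | hmem)
          · by_cases hxv2 : x = v₂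
            · rw [hxv2]
              refine ncard_le_one_of_subset_singleton (a := w₃) ?_
              rintro z ⟨hzN, (hzR | hzP)⟩
              · exact absurd (hnoext z hzN hzR.1) (fun h => hzR.2 (h ▸ (by simp)))
              · rcases hzP with rfl | rfl | rfl
                · exact absurd (hAdjv₁ v₂ hzN) e25.symm
                · rcases hAdjw₁ v₂ hzN with h | h
                  · exact absurd h.symm e15
                  · exact absurd h.symm e35
                · rfl
            · have hsub : T'.neighborSet x ∩ I' ⊆ T'.neighborSet x ∩ R := by
                rintro z ⟨hzN, (hzR | hzP)⟩
                · exact ⟨hzN, hzR⟩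
                · exfalso
                  rcases hzP with rfl | rfl | rfl
                  · exact hxR.2 (Or.inr (Or.inl (hAdjv₁ x hzN)))
                  · rcases hAdjw₁ x hzN with rfl | rfl
                    · exact hxR.2 (Or.inl rfl)
                    · exact hxR.2 (Or.inr (Or.inr (Or.inl rfl)))
                  · rcases hAdjw₃ x hzN with rfl | rfl
                    · exact hxR.2 (Or.inr (Or.inr (Or.inl rfl)))
                    · exact hxv2 rfl
              exact le_trans (Set.ncard_le_ncard hsub (Set.toFinite _)) (hRbound x hxR.1)
          · rcases hmem with rfl | rfl | rfl
            · exact ncard_le_one_of_subset_singleton (a := w₁)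
                (by rw [N1]; exact Set.inter_subset_left)
            · refine ncard_le_one_of_subset_singleton (a := v₁) ?_
              rw [Nw1]
              rintro z ⟨(rfl | rfl), hzI'⟩
              · rfl
              · exact absurd hzI' hw2nI'
            · refine ncard_le_one_of_subset_singleton (a := v₂) ?_
              rw [Nw3]
              rintro z ⟨(rfl | rfl), hzI'⟩
              · exact absurd hzI' hw2nI'
              · rfl
        have hI'card : I'.ncard = R.ncard + 3 := by
          rw [hI'def, Set.ncard_union_eq ?disj (Set.toFinite _) (Set.toFinite _),
            ncard3' e12 e14 e24]
          case disj =>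
            rw [Set.disjoint_left]
            rintro z hzR (rfl | rfl | rfl)
            · exact hv1R hzR
            · exact hw1R hzR
            · exact hw3R hzR
        have hle : I'.ncard ≤ alphaK T' 2 Set.univ := le_csSup bddT' ⟨I', hindI', rfl⟩
        omega
      · -- v₂ ∉ I
        set I' : Set V := R ∪ {v₁, w₂, w₃} with hI'def
        have hw1nI' : w₁ ∉ I' := by
          rintro (h | h)
          · exact hw1R h
          · rcases h with h | h | h
            · exact e12 h.symm
            · exact e23 h
            · exact e24 h
        have hv2nI' : v₂ ∉ I' := by
          rintro (h | h)
          · exact hv2I h.1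
          · rcases h with h | h | h
            · exact e15 h.symm
            · exact e35 h.symm
            · exact e45 h.symm
        have hv2nR : v₂ ∉ R := fun h => hv2I h.1
        have hindI' : IsKIndOn T' 2 Set.univ I' := by
          refine ⟨Set.subset_univ _, ?_⟩
          rintro x (hxR | hmem)
          · have hsub : T'.neighborSet x ∩ I' ⊆ T'.neighborSet x ∩ R := by
              rintro z ⟨hzN, (hzR | hzP)⟩
              · exact ⟨hzN, hzR⟩
              · exfalso
                rcases hzP with rfl | rfl | rfl
                · exact hxR.2 (Or.inr (Or.inl (hAdjv₁ x hzN)))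
                · rcases hAdjw₂ x hzN with rfl | rfl
                  · exact hxR.2 (Or.inr (Or.inl rfl))
                  · exact hxR.2 (Or.inr (Or.inr (Or.inr rfl)))
                · rcases hAdjw₃ x hzN with rfl | rfl
                  · exact hxR.2 (Or.inr (Or.inr (Or.inl rfl)))
                  · exact hv2nR hxR
            exact le_trans (Set.ncard_le_ncard hsub (Set.toFinite _)) (hRbound x hxR.1)
          · rcases hmem with rfl | rfl | rfl
            · exact ncard_le_one_of_subset_singleton (a := w₁)
                (by rw [N1]; exact Set.inter_subset_left)
            · refine ncard_le_one_of_subset_singleton (a := w₃) ?_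
              rw [Nw2]
              rintro z ⟨(rfl | rfl), hzI'⟩
              · exact absurd hzI' hw1nI'
              · rfl
            · refine ncard_le_one_of_subset_singleton (a := w₂) ?_
              rw [Nw3]
              rintro z ⟨(rfl | rfl), hzI'⟩
              · rfl
              · exact absurd hzI' hv2nI'
        have hI'card : I'.ncard = R.ncard + 3 := by
          rw [hI'def, Set.ncard_union_eq ?disj (Set.toFinite _) (Set.toFinite _),
            ncard3' e13 e14 e34]
          case disj =>
            rw [Set.disjoint_left]
            rintro z hzR (rfl | rfl | rfl)
            · exact hv1R hzR
            · exact hw2R hzR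
            · exact hw3R hzR
        have hle : I'.ncard ≤ alphaK T' 2 Set.univ := le_csSup bddT' ⟨I', hindI', rfl⟩
        omega
  have key4 : alphaK T' 2 Set.univ + 2 ≤ alphaK T 2 Set.univ := by
    obtain ⟨I', ⟨-, hind⟩, hcard⟩ := aT'mem
    set R' := {x : V | x ∈ I' ∧ ¬(x = v₁ ∨ x = w₁ ∨ x = w₂ ∨ x = w₃)} with hR'def
    have hR'sub : R' ⊆ I' := fun x hx => hx.1
    have hnv1R : v₁ ∉ R' := fun h => h.2 (Or.inl rfl)
    have hIsplit : I'.ncard ≤ R'.ncard + (I' ∩ {v₁, w₁, w₂, w₃}).ncard := by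
      refine le_trans (Set.ncard_le_ncard ?_ (Set.toFinite _)) (Set.ncard_union_le _ _)
      intro x hx
      by_cases h : x = v₁ ∨ x = w₁ ∨ x = w₂ ∨ x = w₃
      · exact Or.inr ⟨hx, by rcases h with rfl | rfl | rfl | rfl <;> simp⟩
      · exact Or.inl ⟨hx, h⟩
    by_cases hcase : v₂ ∈ I' ∧ ∃ y, T'.Adj v₂ y ∧ y ∈ I' ∧ y ≠ w₃
    · -- case A' : v₂ has an external neighbour in I'
      obtain ⟨hv2I, y, hyadj, hyI, hyw3⟩ := hcase
      have hw3I : w₃ ∉ I' := by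
        intro hw3
        have h2' : 2 ≤ (T'.neighborSet v₂ ∩ I').ncard :=
          two_le_ncard' (Set.toFinite _) ⟨h4.symm, hw3⟩ ⟨hyadj, hyI⟩ (fun h => hyw3 h.symm)
        have := hind v₂ hv2I
        omega
      have hP4 : (I' ∩ {v₁, w₁, w₂, w₃}).ncard ≤ 2 := by
        by_cases hw1I : w₁ ∈ I'
        · have h1' := hind w₁ hw1I
          by_cases hv1I : v₁ ∈ I'
          · have hw2I : w₂ ∉ I' := by
              intro hw2
              have h2' : 2 ≤ (T'.neighborSet w₁ ∩ I').ncard := by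
                refine two_le_ncard' (Set.toFinite _) ⟨?_, hv1I⟩ ⟨?_, hw2⟩ e13
                · rw [Nw1]; exact Set.mem_insert _ _
                · rw [Nw1]; exact Set.mem_insert_of_mem _ rfl
              omega
            refine le_trans (Set.ncard_le_ncard ?_ (Set.toFinite _))
              (le_of_eq (Set.ncard_pair e12))
            rintro x ⟨hxI, (rfl | rfl | rfl | rfl)⟩
            · exact Set.mem_insert _ _
            · exact Set.mem_insert_of_mem _ rfl
            · exact absurd hxI hw2I
            · exact absurd hxI hw3I
          · refine le_trans (Set.ncard_le_ncard ?_ (Set.toFinite _))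
              (le_of_eq (Set.ncard_pair e23))
            rintro x ⟨hxI, (rfl | rfl | rfl | rfl)⟩
            · exact absurd hxI hv1I
            · exact Set.mem_insert _ _
            · exact Set.mem_insert_of_mem _ rfl
            · exact absurd hxI hw3I
        · refine le_trans (Set.ncard_le_ncard ?_ (Set.toFinite _))
            (le_of_eq (Set.ncard_pair e13))
          rintro x ⟨hxI, (rfl | rfl | rfl | rfl)⟩
          · exact Set.mem_insert _ _
          · exact absurd hxI hw1I
          · exact Set.mem_insert_of_mem _ rfl
          · exact absurd hxI hw3I
      set IT : Set (V ⊕ Fin 3) :=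
        Sum.inl '' R' ∪ {Sum.inr 2, Sum.inr 0, Sum.inl w₁, Sum.inl w₂} with hITdef
      have hnv1 : Sum.inl v₁ ∉ IT := by
        rintro (⟨x, hx, hxe⟩ | hmem)
        · exact hnv1R ((Sum.inl.inj hxe) ▸ hx)
        · simp [e12, e13] at hmem
      have hnw3 : Sum.inl w₃ ∉ IT := by
        rintro (⟨x, hx, hxe⟩ | hmem)
        · exact ((Sum.inl.inj hxe) ▸ hx).2 (by simp)
        · simp [e24.symm, e34.symm] at hmem
      have hnr1 : (Sum.inr 1 : V ⊕ Fin 3) ∉ IT := by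
        rintro (⟨x, hx, hxe⟩ | hmem)
        · exact absurd hxe (by simp)
        · simp at hmem
      have hindT : IsKIndOn T 2 Set.univ IT := by
        refine ⟨Set.subset_univ _, ?_⟩
        rintro a (⟨x, hxR, rfl⟩ | hmem)
        · by_cases hxv2 : x = v₂
          · rw [hxv2]
            have hsub : T.neighborSet (Sum.inl v₂) ∩ IT ⊆
                Sum.inl '' (T'.neighborSet v₂ ∩ I') := by
              rintro a ⟨haN, haI⟩
              rw [NTv2] at haN
              rcases haN with ⟨z, hzN, rfl⟩ | rfl
              · rcases haI with ⟨u, huR, hue⟩ | hmem4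
                · obtain rfl := Sum.inl.inj hue
                  exact ⟨_, ⟨hzN, huR.1⟩, rfl⟩
                · simp only [Set.mem_insert_iff, Set.mem_singleton_iff, Sum.inl.injEq,
                    reduceCtorEq, false_or, or_false] at hmem4
                  rcases hmem4 with rfl | rfl
                  · rcases hAdjw₁ v₂ hzN with h | h
                    · exact absurd h.symm e15
                    · exact absurd h.symm e35
                  · rcases hAdjw₂ v₂ hzN with h | h
                    · exact absurd h.symm e25
                    · exact absurd h.symm e45
              · exact absurd haI hnr1
            calc (T.neighborSet (Sum.inl v₂) ∩ IT).ncard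
                ≤ (Sum.inl '' (T'.neighborSet v₂ ∩ I')).ncard :=
                  Set.ncard_le_ncard hsub (Set.toFinite _)
              _ = (T'.neighborSet v₂ ∩ I').ncard :=
                  Set.ncard_image_of_injective _ Sum.inl_injective
              _ ≤ 1 := hind v₂ hv2I
          · have hxv1 : x ≠ v₁ := fun h => hxR.2 (Or.inl h)
            have hsub : T.neighborSet (Sum.inl x) ∩ IT ⊆
                Sum.inl '' (T'.neighborSet x ∩ I') := by
              rintro a ⟨haN, haI⟩
              rw [NTx x hxv1 hxv2] at haN
              obtain ⟨z, hzN, rfl⟩ := haN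
              rcases haI with ⟨u, huR, hue⟩ | hmem4
              · obtain rfl := Sum.inl.inj hue
                exact ⟨_, ⟨hzN, huR.1⟩, rfl⟩
              · simp only [Set.mem_insert_iff, Set.mem_singleton_iff, Sum.inl.injEq,
                  reduceCtorEq, false_or, or_false] at hmem4
                rcases hmem4 with rfl | rfl
                · rcases hAdjw₁ x hzN with rfl | rfl
                  · exact absurd rfl hxv1
                  · exact absurd (Or.inr (Or.inr (Or.inl rfl))) hxR.2
                · rcases hAdjw₂ x hzN with rfl | rfl
                  · exact absurd (Or.inr (Or.inl rfl)) hxR.2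
                  · exact absurd (Or.inr (Or.inr (Or.inr rfl))) hxR.2
            calc (T.neighborSet (Sum.inl x) ∩ IT).ncard
                ≤ (Sum.inl '' (T'.neighborSet x ∩ I')).ncard :=
                  Set.ncard_le_ncard hsub (Set.toFinite _)
              _ = (T'.neighborSet x ∩ I').ncard :=
                  Set.ncard_image_of_injective _ Sum.inl_injective
              _ ≤ 1 := hind x hxR.1
        · simp only [Set.mem_insert_iff, Set.mem_singleton_iff] at hmem
          rcases hmem with rfl | rfl | rfl | rfl
          · exact ncard_le_one_of_subset_singleton
              (by rw [NTr2]; exact Set.inter_subset_left)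
          · refine ncard_le_one_of_subset_singleton (a := Sum.inr 2) ?_
            rw [NTr0]
            rintro a ⟨(rfl | rfl), haI⟩
            · rfl
            · exact absurd haI hnv1
          · refine ncard_le_one_of_subset_singleton (a := Sum.inl w₂) ?_
            rw [NTw1]
            rintro a ⟨(rfl | rfl), haI⟩
            · exact absurd haI hnv1
            · rfl
          · refine ncard_le_one_of_subset_singleton (a := Sum.inl w₁) ?_
            rw [NTw2]
            rintro a ⟨(rfl | rfl), haI⟩
            · rfl
            · exact absurd haI hnw3
      have hITcard : IT.ncard = R'.ncard + 4 := by
        rw [hITdef, Set.ncard_union_eq ?disj (Set.toFinite _) (Set.toFinite _),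
          Set.ncard_image_of_injective _ Sum.inl_injective,
          ncard4' (by simp) (by simp) (by simp) (by simp) (by simp) (by simp [e23])]
        case disj =>
          rw [Set.disjoint_left]
          rintro a ⟨x, hx, rfl⟩ hmem
          simp only [Set.mem_insert_iff, Set.mem_singleton_iff, Sum.inl.injEq,
            reduceCtorEq, false_or, or_false] at hmem
          rcases hmem with rfl | rfl
          · exact hx.2 (by simp)
          · exact hx.2 (by simp)
      have hle : IT.ncard ≤ alphaK T 2 Set.univ := le_csSup bddT ⟨IT, hindT, rfl⟩
      omega
    · -- case B'
      have hP4 : (I' ∩ {v₁, w₁, w₂, w₃}).ncard ≤ 3 := by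
        by_cases hw1I : w₁ ∈ I'
        · have h1' := hind w₁ hw1I
          by_cases hv1I : v₁ ∈ I'
          · have hw2I : w₂ ∉ I' := by
              intro hw2
              have h2' : 2 ≤ (T'.neighborSet w₁ ∩ I').ncard := by
                refine two_le_ncard' (Set.toFinite _) ⟨?_, hv1I⟩ ⟨?_, hw2⟩ e13
                · rw [Nw1]; exact Set.mem_insert _ _
                · rw [Nw1]; exact Set.mem_insert_of_mem _ rfl
              omega
            refine le_trans (Set.ncard_le_ncard ?_ (Set.toFinite _))
              (le_of_eq (ncard3' e12 e14 e24))
            rintro x ⟨hxI, (rfl | rfl | rfl | rfl)⟩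
            · exact Set.mem_insert _ _
            · exact Set.mem_insert_of_mem _ (Set.mem_insert _ _)
            · exact absurd hxI hw2I
            · exact Set.mem_insert_of_mem _ (Set.mem_insert_of_mem _ rfl)
          · refine le_trans (Set.ncard_le_ncard ?_ (Set.toFinite _))
              (le_of_eq (ncard3' e23 e24 e34))
            rintro x ⟨hxI, (rfl | rfl | rfl | rfl)⟩
            · exact absurd hxI hv1I
            · exact Set.mem_insert _ _
            · exact Set.mem_insert_of_mem _ (Set.mem_insert _ _)
            · exact Set.mem_insert_of_mem _ (Set.mem_insert_of_mem _ rfl)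
        · refine le_trans (Set.ncard_le_ncard ?_ (Set.toFinite _))
            (le_of_eq (ncard3' e13 e14 e34))
          rintro x ⟨hxI, (rfl | rfl | rfl | rfl)⟩
          · exact Set.mem_insert _ _
          · exact absurd hxI hw1I
          · exact Set.mem_insert_of_mem _ (Set.mem_insert _ _)
          · exact Set.mem_insert_of_mem _ (Set.mem_insert_of_mem _ rfl)
      set IT : Set (V ⊕ Fin 3) :=
        Sum.inl '' R' ∪ {Sum.inr 2, Sum.inr 0, Sum.inl w₁, Sum.inl w₂, Sum.inr 1} with hITdef
      have hnv1 : Sum.inl v₁ ∉ IT := by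
        rintro (⟨x, hx, hxe⟩ | hmem)
        · exact hnv1R ((Sum.inl.inj hxe) ▸ hx)
        · simp [e12, e13] at hmem
      have hnw3 : Sum.inl w₃ ∉ IT := by
        rintro (⟨x, hx, hxe⟩ | hmem)
        · exact ((Sum.inl.inj hxe) ▸ hx).2 (by simp)
        · simp [e24.symm, e34.symm] at hmem
      have hindT : IsKIndOn T 2 Set.univ IT := by
        refine ⟨Set.subset_univ _, ?_⟩
        rintro a (⟨x, hxR, rfl⟩ | hmem)
        · by_cases hxv2 : x = v₂
          · rw [hxv2]
            have hv2I : v₂ ∈ I' := hxv2 ▸ hxR.1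
            have hnoext : ∀ y, T'.Adj v₂ y → y ∈ I' → y = w₃ := by
              intro y hy hyI
              by_contra h
              exact hcase ⟨hv2I, y, hy, hyI, h⟩
            refine ncard_le_one_of_subset_singleton (a := (Sum.inr 1 : V ⊕ Fin 3)) ?_
            rintro a ⟨haN, haI⟩
            rw [NTv2] at haN
            rcases haN with ⟨z, hzN, rfl⟩ | rfl
            · rcases haI with ⟨u, huR, hue⟩ | hmem4
              · obtain rfl := Sum.inl.inj hue
                have hzw : _ = w₃ := hnoext _ hzN huR.1
                exact absurd (hzw ▸ huR.2) (fun hh => hh (Or.inr (Or.inr (Or.inr rfl))))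
              · simp only [Set.mem_insert_iff, Set.mem_singleton_iff, Sum.inl.injEq,
                  reduceCtorEq, false_or, or_false] at hmem4
                rcases hmem4 with rfl | rfl
                · rcases hAdjw₁ v₂ hzN with h | h
                  · exact absurd h.symm e15
                  · exact absurd h.symm e35
                · rcases hAdjw₂ v₂ hzN with h | h
                  · exact absurd h.symm e25
                  · exact absurd h.symm e45
            · rfl
          · have hxv1 : x ≠ v₁ := fun h => hxR.2 (Or.inl h)
            have hsub : T.neighborSet (Sum.inl x) ∩ IT ⊆
                Sum.inl '' (T'.neighborSet x ∩ I') := by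
              rintro a ⟨haN, haI⟩
              rw [NTx x hxv1 hxv2] at haN
              obtain ⟨z, hzN, rfl⟩ := haN
              rcases haI with ⟨u, huR, hue⟩ | hmem4
              · obtain rfl := Sum.inl.inj hue
                exact ⟨_, ⟨hzN, huR.1⟩, rfl⟩
              · simp only [Set.mem_insert_iff, Set.mem_singleton_iff, Sum.inl.injEq,
                  reduceCtorEq, false_or, or_false] at hmem4
                rcases hmem4 with rfl | rfl
                · rcases hAdjw₁ x hzN with rfl | rfl
                  · exact absurd rfl hxv1
                  · exact absurd (Or.inr (Or.inr (Or.inl rfl))) hxR.2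
                · rcases hAdjw₂ x hzN with rfl | rfl
                  · exact absurd (Or.inr (Or.inl rfl)) hxR.2
                  · exact absurd (Or.inr (Or.inr (Or.inr rfl))) hxR.2
            calc (T.neighborSet (Sum.inl x) ∩ IT).ncard
                ≤ (Sum.inl '' (T'.neighborSet x ∩ I')).ncard :=
                  Set.ncard_le_ncard hsub (Set.toFinite _)
              _ = (T'.neighborSet x ∩ I').ncard :=
                  Set.ncard_image_of_injective _ Sum.inl_injective
              _ ≤ 1 := hind x hxR.1
        · simp only [Set.mem_insert_iff, Set.mem_singleton_iff] at hmem
          rcases hmem with rfl | rfl | rfl | rfl | rfl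
          · exact ncard_le_one_of_subset_singleton
              (by rw [NTr2]; exact Set.inter_subset_left)
          · refine ncard_le_one_of_subset_singleton (a := Sum.inr 2) ?_
            rw [NTr0]
            rintro a ⟨(rfl | rfl), haI⟩
            · rfl
            · exact absurd haI hnv1
          · refine ncard_le_one_of_subset_singleton (a := Sum.inl w₂) ?_
            rw [NTw1]
            rintro a ⟨(rfl | rfl), haI⟩
            · exact absurd haI hnv1
            · rfl
          · refine ncard_le_one_of_subset_singleton (a := Sum.inl w₁) ?_
            rw [NTw2]
            rintro a ⟨(rfl | rfl), haI⟩
            · rfl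
            · exact absurd haI hnw3
          · exact ncard_le_one_of_subset_singleton
              (by rw [NTr1]; exact Set.inter_subset_left)
      have hITcard : IT.ncard = R'.ncard + 5 := by
        rw [hITdef, Set.ncard_union_eq ?disj (Set.toFinite _) (Set.toFinite _),
          Set.ncard_image_of_injective _ Sum.inl_injective,
          ncard5' (by simp) (by simp) (by simp) (by simp) (by simp) (by simp)
            (by simp) (by simp [e23]) (by simp) (by simp)]
        case disj =>
          rw [Set.disjoint_left]
          rintro a ⟨x, hx, rfl⟩ hmem
          simp only [Set.mem_insert_iff, Set.mem_singleton_iff, Sum.inl.injEq,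
            reduceCtorEq, false_or, or_false] at hmem
          rcases hmem with rfl | rfl
          · exact hx.2 (by simp)
          · exact hx.2 (by simp)
      have hle : IT.ncard ≤ alphaK T 2 Set.univ := le_csSup bddT ⟨IT, hindT, rfl⟩
      omega
  refine ⟨le_antisymm key1 key2, le_antisymm key3 key4, ?_⟩
  omega
end
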